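/- arXiv:1211.7335 — 8 statements merged into one kernel-verified Lean document; each statement's English description precedes it below -/
import Mathlib

section
/- Let Γ be a finite connected cubic graph, G ≤ Aut(Γ) vertex-transitive, α a vertex, and let G_α^[1] be the pointwise stabilizer in G of the closed neighbourhood of α (i.e., the subgroup of G_α fixing every neighbour of α). Then G_α^[1] is a 2-group. -/
open SimpleGraph

private lemma fix_of_sq_fix {V : Type*} (h : Equiv.Perm V) {v : V} {m : ℕ}
    (hm : Odd m) (hord : h ^ m = 1) (h2 : h (h v) = v) : h v = v := by
  obtain ⟨j, rfl⟩ := hm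
  have heven : ∀ k : ℕ, (h ^ (2 * k)) v = v := by
    intro k
    induction k with
    | zero => simp
    | succ k ih =>
      have : h ^ (2 * (k + 1)) = h ^ (2 * k) * (h * h) := by
        rw [mul_add, mul_one, pow_add, pow_two]
      rw [this, Equiv.Perm.mul_apply, Equiv.Perm.mul_apply, h2, ih]
  have : (h ^ (2 * j + 1)) v = v := by rw [hord]; rfl
  rw [pow_succ', Equiv.Perm.mul_apply, heven j] at this
  exact this

private lemma fixes_all {V : Type*} [Fintype V] (Γ : SimpleGraph V) (hconn : Γ.Connected)
    (hcubic : ∀ v : V, (Γ.neighborSet v).ncard = 3)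
    (h : Equiv.Perm V)
    (hadj : ∀ u w : V, Γ.Adj (h u) (h w) ↔ Γ.Adj u w)
    (α : V) (hα : h α = α) (hnb : ∀ β, Γ.Adj α β → h β = β)
    (m : ℕ) (hm : Odd m) (hord : h ^ m = 1) :
    ∀ v, h v = v := by
  have key : ∀ n v, Γ.dist α v ≤ n → h v = v := by
    intro n
    induction n with
    | zero =>
      intro v hv
      have : α = v := hconn.dist_eq_zero_iff.mp (Nat.le_zero.mp hv)
      rw [← this, hα]
    | succ n ih =>
      intro v hv
      rcases Nat.lt_or_ge (Γ.dist α v) (n + 1) with h1 | h1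
      · exact ih v (Nat.lt_succ_iff.mp h1)
      have hd : Γ.dist α v = n + 1 := le_antisymm hv h1
      rcases Nat.eq_zero_or_pos n with rfl | hn
      · exact hnb v (dist_eq_one_iff_adj.mp hd)
      -- get a geodesic walk
      obtain ⟨p, hp⟩ := exists_walk_of_dist_ne_zero (by omega : Γ.dist α v ≠ 0)
      have hvα : v ≠ α := by
        intro e; rw [e, SimpleGraph.dist_self] at hd; omega
      obtain ⟨β, hadjvβ, q, hq⟩ := SimpleGraph.Walk.exists_eq_cons_of_ne hvα p.reverse
      have hqlen : q.length = n := by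
        have := congrArg SimpleGraph.Walk.length hq
        simp [hp, hd] at this
        omega
      have hdistβ : Γ.dist α β ≤ n := by
        have := SimpleGraph.dist_le q.reverse
        simpa [hqlen] using this
      have hfixβ : h β = β := ih β hdistβ
      -- get δ, the next vertex from β towards α
      cases q with
      | nil => simp at hqlen; omega
      | @cons _ δ _ hadjβδ q' =>
        simp only [SimpleGraph.Walk.length_cons] at hqlen
        have hdistδ : Γ.dist α δ ≤ n - 1 := by
          have := SimpleGraph.dist_le q'.reverse
          simp only [SimpleGraph.Walk.length_reverse] at this
          omega
        have hfixδ : h δ = δ := ih δ (by omega)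
        have hδv : δ ≠ v := by
          intro e; rw [e, hd] at hdistδ; omega
        by_contra hvne
        have hAdjβv : Γ.Adj β v := hadjvβ.symm
        have hAdjβhv : Γ.Adj β (h v) := by
          have := (hadj β v).mpr hAdjβv
          rwa [hfixβ] at this
        have hδhv : δ ≠ h v := by
          intro e
          exact hδv (h.injective (by rw [hfixδ, ← e]))
        have hvhv : v ≠ h v := fun e => hvne e.symm
        have hsub : ({δ, v, h v} : Set V) ⊆ Γ.neighborSet β := by
          intro x hx
          rcases hx with rfl | rfl | rfl
          · exact hadjβδ
          · exact hAdjβv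
          · exact hAdjβhv
        have htriple : ({δ, v, h v} : Set V).ncard = 3 :=
          Set.ncard_eq_three.mpr ⟨δ, v, h v, hδv, hδhv, hvhv, rfl⟩
        have hN : Γ.neighborSet β = {δ, v, h v} :=
          (Set.eq_of_subset_of_ncard_le hsub
            (by rw [htriple, hcubic]) (Set.toFinite _)).symm
        have hAdjβhhv : Γ.Adj β (h (h v)) := by
          have := (hadj β (h v)).mpr hAdjβhv
          rwa [hfixβ] at this
        have hmem : h (h v) ∈ ({δ, v, h v} : Set V) := by
          rw [← hN]; exact hAdjβhhv
        have h2 : h (h v) = v := by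
          rcases hmem with e | e | e
          · exact absurd (h.injective (by rw [hfixδ, ← e])).symm hδhv
          · exact e
          · exact absurd (h.injective e) (fun e' => hvne e')
        exact hvne (fix_of_sq_fix h hm hord h2)
  exact fun v => key (Γ.dist α v) v le_rfl

/-- The pointwise stabiliser of the closed neighbourhood of a vertex `α` in a
vertex-transitive group of automorphisms of a finite connected cubic graph is a 2-group. -/
theorem stmt0 {V : Type*} [Fintype V] (Γ : SimpleGraph V) (hconn : Γ.Connected)
    (hcubic : ∀ v : V, (Γ.neighborSet v).ncard = 3)
    (G : Subgroup (Equiv.Perm V))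
    (hG : ∀ g ∈ G, ∀ u w : V, Γ.Adj (g u) (g w) ↔ Γ.Adj u w)
    (htrans : ∀ u w : V, ∃ g ∈ G, g u = w) (α : V) :
    IsPGroup 2 ↥(⨅ β ∈ insert α (Γ.neighborSet α), MulAction.stabilizer G β) := by
  intro g
  set σ : Equiv.Perm V := ((g : G) : Equiv.Perm V) with hσ
  have hmem := g.2
  simp only [Subgroup.mem_iInf] at hmem
  have hfix : ∀ β ∈ insert α (Γ.neighborSet α), σ β = β := by
    intro β hβ
    have := hmem β hβ
    rw [MulAction.mem_stabilizer_iff] at this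
    exact this
  set N := orderOf σ with hNdef
  have hN0 : N ≠ 0 := (orderOf_pos σ).ne'
  set k := N.factorization 2 with hk
  set m := N / 2 ^ k with hmdef
  have hmodd : Odd m := by
    have := Nat.not_dvd_ordCompl (Nat.prime_two) hN0
    exact Nat.odd_iff.mpr (Nat.two_dvd_ne_zero.mp this)
  have hNm : 2 ^ k * m = N := Nat.ordProj_mul_ordCompl_eq_self N 2
  refine ⟨k, ?_⟩
  have hpow : ((g ^ 2 ^ k : _) : Equiv.Perm V) = σ ^ 2 ^ k := by
    push_cast; rfl
  have hord : (σ ^ 2 ^ k) ^ m = 1 := by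
    rw [← pow_mul, hNm, hNdef, pow_orderOf_eq_one]
  have hadj' : ∀ u w : V, Γ.Adj ((σ ^ 2 ^ k) u) ((σ ^ 2 ^ k) w) ↔ Γ.Adj u w := by
    have hmem' : ((g : G) : Equiv.Perm V) ^ 2 ^ k ∈ G := by
      have := ((g : G) ^ 2 ^ k).2
      simpa using this
    exact hG _ hmem'
  have hfixα : (σ ^ 2 ^ k) α = α :=
    Function.IsFixedPt.perm_pow (hfix α (Set.mem_insert _ _)) _
  have hfixnb : ∀ β, Γ.Adj α β → (σ ^ 2 ^ k) β = β := fun β hβ =>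
    Function.IsFixedPt.perm_pow (hfix β (Set.mem_insert_of_mem _ hβ)) _
  have hall := fixes_all Γ hconn hcubic (σ ^ 2 ^ k) hadj' α hfixα hfixnb m hmodd hord
  have h1 : σ ^ 2 ^ k = 1 := Equiv.ext hall
  have : ((g ^ 2 ^ k : _) : Equiv.Perm V) = 1 := by rw [hpow, h1]
  exact_mod_cast this
end

section
/- Let Γ be a finite connected cubic graph and G ≤ Aut(Γ) vertex-transitive. Then for any vertex α, either G_α is a 2-group, or |G_α| = 3·2^s for some s ≥ 0. In particular, every element of G whose order is coprime to both 2 and 3 acts semiregularly on the vertices of Γ. -/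
/-!
Restricting `G_α` to the three neighbours of `α` gives a homomorphism to `Sym(3)`, whose image
has order dividing 6. Its kernel is a 2-group: an automorphism of odd order fixing a vertex `u`
and one neighbour `v` of `u` permutes the other two neighbours of `u`, so its square, and hence
itself, fixes them; by connectivity, an odd-order automorphism fixing `α` and all its
neighbours is the identity. So `|G_α| = 2^a·d` with `d ∣ 6`, and an element of order coprime
to 6 fixing a vertex `v` has order dividing `|G_v|`, hence is trivial.
-/

open Equiv MulAction

namespace Equiv.Perm

variable {α : Type*}

theorem apply_eq_self_of_sq_apply_eq_self {σ : Perm α} (hσ : Odd (orderOf σ)) {x : α}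
    (hx : (σ ^ 2) x = x) : σ x = x := by
  have hσ_mem : σ ∈ Subgroup.zpowers (σ ^ 2) :=
    mem_zpowers_pow_iff.mpr (Nat.coprime_comm.mp hσ.coprime_two_right)
  exact Subgroup.zpowers_le.mpr (mem_stabilizer_iff.mpr hx) hσ_mem

theorem sq_apply_eq_self_of_mapsTo {σ : Perm α} {s : Set α} (hs : s.ncard = 3)
    (hσ : Set.MapsTo σ s s) {v w : α} (hv : v ∈ s) (hσv : σ v = v) (hw : w ∈ s) :
    (σ ^ 2) w = w := by
  by_contra h
  rw [sq, mul_apply] at h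
  have hσw : σ w ≠ w := fun hfix => h (by rw [hfix, hfix])
  have hwv : w ≠ v := by rintro rfl; exact hσw hσv
  have hsub : ({v, w, σ w, σ (σ w)} : Set α) ⊆ s := by
    simp only [Set.insert_subset_iff, Set.singleton_subset_iff]
    exact ⟨hv, hw, hσ hw, hσ (hσ hw)⟩
  have hσw_ne : σ w ≠ v := fun e => hwv (σ.injective (e.trans hσv.symm))
  have hσσw_ne : σ (σ w) ≠ v := fun e => hσw_ne (σ.injective (e.trans hσv.symm))
  have hcard := Set.ncard_le_ncard hsub (Set.finite_of_ncard_pos (by omega))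
  rw [Set.ncard_insert_of_notMem (by simp [hwv.symm, hσw_ne.symm, hσσw_ne.symm]),
    Set.ncard_insert_of_notMem (by simp [hσw.symm, Ne.symm h]),
    Set.ncard_pair fun e => hσw (σ.injective e).symm, hs] at hcard
  omega

end Equiv.Perm

theorem IsPGroup.of_forall_orderOf_prime {K : Type*} [Group K] [Finite K] {p : ℕ}
    [Fact p.Prime] (h : ∀ (g : K) (q : ℕ), q.Prime → orderOf g = q → q = p) :
    IsPGroup p K :=
  IsPGroup.iff_card.mpr ⟨_, Nat.eq_prime_pow_of_unique_prime_dvd Nat.card_pos.ne'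
    fun {q} hq hdvd =>
      have := Fact.mk hq
      let ⟨g, hg⟩ := exists_prime_orderOf_dvd_card' q hdvd
      h g q hq hg⟩

theorem isPGroup_two_or_card_eq_three_mul_two_pow {H β : Type*} [Group H] [Finite H]
    (φ : H →* Perm β) (hβ : Nat.card β = 3) (hker : IsPGroup 2 φ.ker) :
    IsPGroup 2 H ∨ ∃ s : ℕ, Nat.card H = 3 * 2 ^ s := by
  have := Fact.mk Nat.prime_two
  have := Nat.finite_of_card_ne_zero (hβ ▸ three_ne_zero)
  obtain ⟨a, ha⟩ := hker.exists_card_eq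
  have hrange : Nat.card φ.range ∣ 6 := by
    have := φ.range.card_subgroup_dvd_card
    rwa [Nat.card_perm, hβ] at this
  have hcard : Nat.card H = 2 ^ a * Nat.card φ.range := by
    rw [← φ.ker.card_mul_index, Subgroup.index_ker, ha]
  generalize Nat.card φ.range = d at hrange hcard
  have hd : d ≤ 6 := Nat.le_of_dvd (by norm_num) hrange
  interval_cases d <;> norm_num at hrange
  · exact .inl (.of_card (n := a) (by rw [hcard, mul_one]))
  · exact .inl (.of_card (n := a + 1) (by rw [hcard, pow_succ]))
  · exact .inr ⟨a, by rw [hcard, mul_comm]⟩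
  · exact .inr ⟨a + 1, by rw [hcard]; ring⟩

theorem eq_one_of_coprime_six {K : Type*} [Group K] [Finite K]
    (hK : IsPGroup 2 K ∨ ∃ s : ℕ, Nat.card K = 3 * 2 ^ s) {g : K}
    (hg : Nat.Coprime (orderOf g) 6) : g = 1 := by
  have := Fact.mk Nat.prime_two
  have h2 : Nat.Coprime (orderOf g) 2 := hg.coprime_dvd_right (by norm_num)
  have h3 : Nat.Coprime (orderOf g) 3 := hg.coprime_dvd_right (by norm_num)
  rw [← orderOf_eq_one_iff]
  refine Nat.Coprime.eq_one_of_dvd ?_ (orderOf_dvd_natCard g)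
  rcases hK with hK | ⟨s, hs⟩
  · obtain ⟨n, hn⟩ := hK.exists_card_eq
    exact hn ▸ h2.pow_right n
  · exact hs ▸ h3.mul_right (h2.pow_right s)

namespace SimpleGraph

variable {V : Type*}

theorem Preconnected.forall_of_adj_imp {Γ : SimpleGraph V} (hΓ : Γ.Preconnected)
    {P : V → Prop} (hP : ∀ u w, Γ.Adj u w → P u → P w) {a : V} (ha : P a) (v : V) :
    P v := by
  obtain ⟨p⟩ := hΓ a v
  induction p with
  | nil => exact ha
  | cons h _ ih => exact ih (hP _ _ h ha)

section Automorphism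

variable {Γ : SimpleGraph V} {π : Perm V}

theorem mapsTo_neighborSet_of_apply_eq_self (hπ : ∀ u w, Γ.Adj (π u) (π w) ↔ Γ.Adj u w)
    {u : V} (hu : π u = u) : Set.MapsTo π (Γ.neighborSet u) (Γ.neighborSet u) :=
  fun w hw => by rwa [mem_neighborSet, ← hu, hπ]

theorem apply_eq_self_of_adj_of_odd (hπ : ∀ u w, Γ.Adj (π u) (π w) ↔ Γ.Adj u w)
    (hcubic : ∀ v, (Γ.neighborSet v).ncard = 3) (hodd : Odd (orderOf π)) {u v w : V}
    (huv : Γ.Adj u v) (hu : π u = u) (hv : π v = v) (huw : Γ.Adj u w) : π w = w :=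
  Perm.apply_eq_self_of_sq_apply_eq_self hodd <| Perm.sq_apply_eq_self_of_mapsTo (hcubic u)
    (mapsTo_neighborSet_of_apply_eq_self hπ hu) huv hv huw

theorem eq_one_of_forall_adj_apply_eq_self (hπ : ∀ u w, Γ.Adj (π u) (π w) ↔ Γ.Adj u w)
    (hconn : Γ.Preconnected) (hcubic : ∀ v, (Γ.neighborSet v).ncard = 3)
    (hodd : Odd (orderOf π)) {a : V} (ha : π a = a) (hN : ∀ w, Γ.Adj a w → π w = w) :
    π = 1 := by
  have hfix : ∀ v, π v = v ∧ ∀ w, Γ.Adj v w → π w = w :=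
    hconn.forall_of_adj_imp (fun u v huv ⟨hu, huN⟩ =>
      ⟨huN v huv, fun _ hvw =>
        apply_eq_self_of_adj_of_odd hπ hcubic hodd huv.symm (huN v huv) hu hvw⟩) ⟨ha, hN⟩
  exact Perm.ext fun v => (hfix v).1

end Automorphism

variable (Γ : SimpleGraph V) {G : Subgroup (Perm V)}

def stabilizerToPermNeighborSet (hG : ∀ g ∈ G, ∀ u w, Γ.Adj (g u) (g w) ↔ Γ.Adj u w)
    (α : V) : stabilizer G α →* Perm (Γ.neighborSet α) where
  toFun g := (g : Perm V).subtypePerm fun w => by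
    have hgα : (g : Perm V) α = α := g.2
    rw [mem_neighborSet, mem_neighborSet, ← hG _ (g : G).2 α w, hgα]
  map_one' := rfl
  map_mul' _ _ := rfl

theorem mem_ker_stabilizerToPermNeighborSet
    (hG : ∀ g ∈ G, ∀ u w, Γ.Adj (g u) (g w) ↔ Γ.Adj u w) {α : V} {g : stabilizer G α} :
    g ∈ (Γ.stabilizerToPermNeighborSet hG α).ker ↔
      ∀ w, Γ.Adj α w → (g : Perm V) w = w := by
  simp only [MonoidHom.mem_ker, Perm.ext_iff, Subtype.forall, Subtype.ext_iff]
  rfl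

theorem isPGroup_two_ker_stabilizerToPermNeighborSet [Finite V] (hconn : Γ.Preconnected)
    (hcubic : ∀ v, (Γ.neighborSet v).ncard = 3)
    (hG : ∀ g ∈ G, ∀ u w, Γ.Adj (g u) (g w) ↔ Γ.Adj u w) (α : V) :
    IsPGroup 2 (Γ.stabilizerToPermNeighborSet hG α).ker := by
  have := Fact.mk Nat.prime_two
  refine .of_forall_orderOf_prime fun g q hq hgq => by_contra fun hq2 => hq.one_lt.ne' ?_
  set π : Perm V := (((g : stabilizer G α) : G) : Perm V) with hπ
  have hπ_odd : Odd (orderOf π) := by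
    simpa only [hπ, Subgroup.orderOf_coe, hgq] using hq.odd_of_ne_two hq2
  have hπ_one : π = 1 :=
    eq_one_of_forall_adj_apply_eq_self (hG π (g : stabilizer G α).1.2) hconn hcubic hπ_odd
      (g : stabilizer G α).2 ((Γ.mem_ker_stabilizerToPermNeighborSet hG).mp g.2)
  have hg_one : g = 1 := by
    simpa only [hπ, OneMemClass.coe_eq_one] using hπ_one
  rw [← hgq, hg_one, orderOf_one]

theorem isPGroup_two_or_card_stabilizer_eq_three_mul_two_pow [Finite V]
    (hconn : Γ.Preconnected) (hcubic : ∀ v, (Γ.neighborSet v).ncard = 3)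
    (hG : ∀ g ∈ G, ∀ u w, Γ.Adj (g u) (g w) ↔ Γ.Adj u w) (α : V) :
    IsPGroup 2 (stabilizer G α) ∨ ∃ s : ℕ, Nat.card (stabilizer G α) = 3 * 2 ^ s :=
  isPGroup_two_or_card_eq_three_mul_two_pow (Γ.stabilizerToPermNeighborSet hG α)
    (by rw [Nat.card_coe_set_eq, hcubic])
    (Γ.isPGroup_two_ker_stabilizerToPermNeighborSet hconn hcubic hG α)

end SimpleGraph

theorem stmt1_general {V : Type*} [Fintype V] (Γ : SimpleGraph V) (hconn : Γ.Connected)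
    (hcubic : ∀ v : V, (Γ.neighborSet v).ncard = 3)
    (G : Subgroup (Equiv.Perm V))
    (hG : ∀ g ∈ G, ∀ u w : V, Γ.Adj (g u) (g w) ↔ Γ.Adj u w)
    (α : V) :
    (IsPGroup 2 ↥(MulAction.stabilizer G α) ∨
      ∃ s : ℕ, Nat.card ↥(MulAction.stabilizer G α) = 3 * 2 ^ s) ∧
    ∀ g ∈ G, Nat.Coprime (orderOf g) 6 →
      ∀ x ∈ Subgroup.zpowers g, (∃ v : V, x v = v) → x = 1 := by
  have hstab :=
    Γ.isPGroup_two_or_card_stabilizer_eq_three_mul_two_pow hconn.preconnected hcubic hG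
  refine ⟨hstab α, ?_⟩
  rintro g hg hcop x hx ⟨v, hxv⟩
  have hxG : x ∈ G := Subgroup.zpowers_le.mpr hg hx
  have hx_stab : (⟨x, hxG⟩ : G) ∈ stabilizer G v := hxv
  have hx_cop : Nat.Coprime (orderOf x) 6 :=
    hcop.coprime_dvd_left (orderOf_dvd_of_mem_zpowers hx)
  have := eq_one_of_coprime_six (hstab v) (g := ⟨⟨x, hxG⟩, hx_stab⟩)
    (by rwa [Subgroup.orderOf_mk, Subgroup.orderOf_mk])
  exact congrArg (fun y : stabilizer G v => ((y : G) : Perm V)) this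

/-- In a finite connected cubic vertex-transitive graph, each vertex stabiliser is
either a 2-group or has order `3·2^s`; in particular every automorphism in `G` whose
order is coprime to 2 and 3 is semiregular on the vertices. -/
theorem stmt1 {V : Type*} [Fintype V] (Γ : SimpleGraph V) (hconn : Γ.Connected)
    (hcubic : ∀ v : V, (Γ.neighborSet v).ncard = 3)
    (G : Subgroup (Equiv.Perm V))
    (hG : ∀ g ∈ G, ∀ u w : V, Γ.Adj (g u) (g w) ↔ Γ.Adj u w)
    (htrans : ∀ u w : V, ∃ g ∈ G, g u = w) (α : V) :
    (IsPGroup 2 ↥(MulAction.stabilizer G α) ∨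
      ∃ s : ℕ, Nat.card ↥(MulAction.stabilizer G α) = 3 * 2 ^ s) ∧
    ∀ g ∈ G, Nat.Coprime (orderOf g) 6 →
      ∀ x ∈ Subgroup.zpowers g, (∃ v : V, x v = v) → x = 1 :=
  stmt1_general Γ hconn hcubic G hG α
end

section
/- Let T be a finite group, ℓ ≥ 1, let S be a proper subgroup of T, and let M be a subgroup of the direct power T^ℓ generated by m elements. If T^ℓ = M · S^ℓ (setwise product), then ℓ ≤ |T|^m. -/
/-! If every generator of `M` takes the same value at two coordinates `i ≠ j`, then so does every
element of `M`, and `T^ℓ = M · S^ℓ` forces `t = (s i)⁻¹ * s j ∈ S` for every `t ∈ T` (look at the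
element with `t` in coordinate `j` and `1` elsewhere). So for a proper subgroup `S` the coordinates
are told apart by the generators, i.e. `i ↦ (g i)_{g ∈ gens}` embeds `Fin ℓ` into `T ^ gens`. -/

open Subgroup

section

variable {ι T : Type*} [Group T]

theorem Subgroup.inv_apply_mul_apply_mem_of_eq_mul_pi {S : Subgroup T} {x y s : ι → T} {i j : ι}
    (hy : y i = y j) (hs : s ∈ pi Set.univ fun _ => S) (hx : x = y * s) :
    (x i)⁻¹ * x j ∈ S := by
  have hsij : (s i)⁻¹ * s j ∈ S := S.mul_mem (S.inv_mem (hs i trivial)) (hs j trivial)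
  simpa [hx, hy, mul_assoc] using hsij

theorem Subgroup.eq_top_of_forall_eq_mul_pi_of_apply_eq (S : Subgroup T) (M : Subgroup (ι → T))
    {i j : ι} (hij : i ≠ j) (hM : ∀ y ∈ M, y i = y j)
    (hprod : ∀ x : ι → T, ∃ y ∈ M, ∃ s ∈ pi Set.univ (fun _ => S), x = y * s) : S = ⊤ := by
  classical
  refine (eq_top_iff' S).2 fun t => ?_
  obtain ⟨y, hy, s, hs, hx⟩ := hprod (Pi.mulSingle j t)
  simpa [hij] using inv_apply_mul_apply_mem_of_eq_mul_pi (hM y hy) hs hx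

theorem Subgroup.apply_eq_of_mem_closure {gens : Set (ι → T)} {i j : ι}
    (hgens : ∀ g ∈ gens, g i = g j) {y : ι → T} (hy : y ∈ closure gens) : y i = y j :=
  (closure_le (MonoidHom.eqLocus (Pi.evalMonoidHom (fun _ : ι => T) i) (Pi.evalMonoidHom _ j))).2
    (fun g hg => hgens g hg) hy

theorem Subgroup.injective_eval_gens_of_forall_eq_mul_pi {S : Subgroup T} (hS : S ≠ ⊤)
    (gens : Set (ι → T))
    (hprod : ∀ x : ι → T, ∃ y ∈ closure gens, ∃ s ∈ pi Set.univ (fun _ => S), x = y * s) :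
    Function.Injective fun (i : ι) (g : gens) => (g : ι → T) i := by
  intro i j hij
  by_contra hne
  exact hS <| S.eq_top_of_forall_eq_mul_pi_of_apply_eq _ hne
    (fun y => apply_eq_of_mem_closure fun g hg => congrFun hij ⟨g, hg⟩) hprod

end

theorem stmt6_general (T : Type*) [Group T] [Finite T] (ℓ m : ℕ)
    (S : Subgroup T) (hS : S ≠ ⊤)
    (M : Subgroup (Fin ℓ → T)) (gens : Finset (Fin ℓ → T)) (hgens : gens.card ≤ m)
    (hM : M = Subgroup.closure (gens : Set (Fin ℓ → T)))
    (hprod : ∀ x : Fin ℓ → T, ∃ y ∈ M,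
      ∃ s ∈ Subgroup.pi Set.univ (fun _ : Fin ℓ => S), x = y * s) :
    ℓ ≤ Nat.card T ^ m := by
  subst hM
  have hinj := injective_eval_gens_of_forall_eq_mul_pi hS _ hprod
  calc ℓ = Nat.card (Fin ℓ) := (Nat.card_fin ℓ).symm
    _ ≤ Nat.card (↥(gens : Set (Fin ℓ → T)) → T) := Nat.card_le_card_of_injective _ hinj
    _ = Nat.card T ^ gens.card := by simp [Nat.card_fun]
    _ ≤ Nat.card T ^ m := Nat.pow_le_pow_right Nat.card_pos hgens

/-- If `T^ℓ = M · S^ℓ` with `S` a proper subgroup of the finite group `T` and `M`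
an `m`-generated subgroup of `T^ℓ`, then `ℓ ≤ |T|^m`. -/
theorem stmt6 (T : Type*) [Group T] [Finite T] (ℓ m : ℕ) (hl : 1 ≤ ℓ)
    (S : Subgroup T) (hS : S ≠ ⊤)
    (M : Subgroup (Fin ℓ → T)) (gens : Finset (Fin ℓ → T)) (hgens : gens.card ≤ m)
    (hM : M = Subgroup.closure (gens : Set (Fin ℓ → T)))
    (hprod : ∀ x : Fin ℓ → T, ∃ y ∈ M,
      ∃ s ∈ Subgroup.pi Set.univ (fun _ : Fin ℓ => S), x = y * s) :
    ℓ ≤ Nat.card T ^ m :=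
  stmt6_general T ℓ m S hS M gens hgens hM hprod
end

section
/- Let G be a finite group, H = ⟨h⟩ a cyclic subgroup of G with |h| = 2 and H core-free in G, and suppose G = V ⋊ Q where V has exponent 3 and Q is a dihedral 2-group with H = Z(Q). Then in the action of G on the right cosets of H, every semiregular element of G has order 1, 2, 3, or 6. -/
open DihedralGroup in
/-- In a dihedral group, the square of an element of order 4 is central. -/
lemma dihedral_sq_central {n : ℕ} (d : DihedralGroup n) (hd : orderOf d = 4) :
    ∀ w : DihedralGroup n, d ^ 2 * w = w * d ^ 2 := by
  cases d with
  | sr i => rw [orderOf_sr] at hd; norm_num at hd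
  | r i =>
    have h4 : (r i : DihedralGroup n) ^ 4 = 1 := by rw [← hd]; exact pow_orderOf_eq_one _
    have h4i : i + i + i + i = 0 := by
      have h44 : (r i : DihedralGroup n) ^ 4 = r (i + i + i + i) := by
        rw [pow_succ, pow_succ, pow_succ, pow_one, r_mul_r, r_mul_r, r_mul_r]
      rw [h44, one_def] at h4
      exact r.inj h4
    have hsq : (r i : DihedralGroup n) ^ 2 = r (i + i) := by
      rw [pow_two, r_mul_r]
    intro w
    cases w with
    | r j => rw [hsq]; simp [add_comm]
    | sr j =>
      rw [hsq]
      simp only [r_mul_sr, sr_mul_r]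
      congr 1
      have hneg : -(i + i) = i + i := by
        rw [neg_eq_iff_add_eq_zero]
        linear_combination h4i
      rw [sub_eq_add_neg, hneg]

/-- Let `G = V ⋊ Q` be finite with `V` of exponent 3 and `Q` a dihedral 2-group whose
centre is `H = ⟨h⟩` of order 2, `H` core-free in `G`. Then every element of `G` acting
semiregularly on the cosets of `H` has order 1, 2, 3 or 6. -/
theorem stmt12 (G : Type*) [Group G] [Fintype G] (h : G) (hordh : orderOf h = 2)
    (hcore : (Subgroup.zpowers h).normalCore = ⊥)
    (V Q : Subgroup G) (hVnormal : V.Normal)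
    (hVQ : V ⊓ Q = ⊥) (hVQtop : V ⊔ Q = ⊤)
    (hVexp : Monoid.exponent ↥V = 3)
    (hQ2 : IsPGroup 2 ↥Q)
    (hQdih : ∃ k : ℕ, Nonempty (↥Q ≃* DihedralGroup (2 ^ k)))
    (hhQ : h ∈ Q)
    (hcenter : ∀ g ∈ Q, (∀ q ∈ Q, g * q = q * g) ↔ (g = 1 ∨ g = h))
    (g : G)
    (hsemi : ∀ x ∈ Subgroup.zpowers g,
      (∃ ω : G ⧸ Subgroup.zpowers h, x • ω = ω) → x = 1) :
    orderOf g = 1 ∨ orderOf g = 2 ∨ orderOf g = 3 ∨ orderOf g = 6 := by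
  set n := orderOf g with hn
  have hn0 : n ≠ 0 := (orderOf_pos g).ne'
  -- elements of V cube to 1
  have hVcube : ∀ v ∈ V, v ^ 3 = 1 := by
    intro v hv
    have := Monoid.pow_exponent_eq_one (⟨v, hv⟩ : V)
    rw [hVexp] at this
    exact congrArg Subtype.val this
  -- the restriction of the quotient map to any 2-subgroup is injective
  have hinj : ∀ S : Subgroup G, IsPGroup 2 S →
      Function.Injective ((QuotientGroup.mk' V).comp S.subtype) := by
    intro S hS
    rw [injective_iff_map_eq_one]
    intro a ha
    have haV : (a : G) ∈ V := by
      rwa [MonoidHom.comp_apply, ← MonoidHom.mem_ker, QuotientGroup.ker_mk'] at ha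
    obtain ⟨k, hk⟩ := hS a
    have h2 : orderOf a ∣ 2 ^ k := orderOf_dvd_of_pow_eq_one hk
    have h3 : orderOf a ∣ 3 := by
      rw [← Subgroup.orderOf_coe]
      exact orderOf_dvd_of_pow_eq_one (hVcube a haV)
    have hcop : Nat.gcd (2 ^ k) 3 = 1 := Nat.Coprime.pow_left k (by norm_num)
    have : orderOf a ∣ 1 := hcop ▸ Nat.dvd_gcd h2 h3
    exact orderOf_eq_one_iff.mp (Nat.dvd_one.mp this)
  -- Q maps onto G ⧸ V
  have hmapQ : Q.map (QuotientGroup.mk' V) = ⊤ := by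
    have htop : (V ⊔ Q).map (QuotientGroup.mk' V) = ⊤ := by
      rw [hVQtop, ← MonoidHom.range_eq_map, MonoidHom.range_eq_top]
      exact QuotientGroup.mk'_surjective V
    rwa [Subgroup.map_sup, QuotientGroup.map_mk'_self, bot_sup_eq] at htop
  have hsurj : Function.Surjective ((QuotientGroup.mk' V).comp Q.subtype) := by
    intro q
    have hq : q ∈ Q.map (QuotientGroup.mk' V) := hmapQ ▸ Subgroup.mem_top q
    obtain ⟨a, ha, rfl⟩ := hq
    exact ⟨⟨a, ha⟩, rfl⟩
  have e2 : Q ≃* G ⧸ V := MulEquiv.ofBijective _ ⟨hinj Q hQ2, hsurj⟩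
  have hGV2 : IsPGroup 2 (G ⧸ V) := hQ2.of_equiv e2
  -- the 3-part of n is at most 3
  obtain ⟨m, hm⟩ := hGV2 (QuotientGroup.mk g)
  have hgV : g ^ (2 ^ m) ∈ V := by
    have h1 : (QuotientGroup.mk' V) (g ^ (2 ^ m)) = 1 := by
      rw [map_pow]; exact hm
    rwa [← QuotientGroup.ker_mk' V, MonoidHom.mem_ker]
  have hdvd : n ∣ 3 * 2 ^ m := by
    rw [hn, orderOf_dvd_iff_pow_eq_one, mul_comm, pow_mul]
    exact hVcube _ hgV
  -- 4 does not divide n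
  have h4 : ¬ (4 ∣ n) := by
    intro hdvd4
    set x := g ^ (n / 4) with hx
    have hxord : orderOf x = 4 := by
      rw [hx, orderOf_pow, ← hn, Nat.gcd_eq_right (Nat.div_dvd_of_dvd hdvd4),
        Nat.div_div_self hdvd4 hn0]
    have hxP : IsPGroup 2 (Subgroup.zpowers x) := IsPGroup.of_card (n := 2)
      (by rw [Nat.card_zpowers, hxord]; norm_num)
    obtain ⟨P, hP⟩ := hxP.exists_le_sylow
    obtain ⟨PQ, hPQ⟩ := hQ2.exists_le_sylow
    -- Q is a Sylow 2-subgroup, i.e. PQ = Q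
    have hcard : Nat.card PQ ≤ Nat.card Q := by
      calc Nat.card PQ ≤ Nat.card (G ⧸ V) :=
            Nat.card_le_card_of_injective _ (hinj PQ PQ.2)
        _ = Nat.card Q := (Nat.card_congr e2.toEquiv).symm
    have hQPQ : (PQ : Subgroup G) = Q := by
      symm
      apply SetLike.ext'
      apply Set.eq_of_subset_of_ncard_le (SetLike.coe_subset_coe.mpr hPQ) ?_ (Set.toFinite _)
      rw [← Nat.card_coe_set_eq, ← Nat.card_coe_set_eq]
      exact hcard
    haveI : Fact (Nat.Prime 2) := ⟨Nat.prime_two⟩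
    obtain ⟨c, hc⟩ := MulAction.exists_smul_eq G P PQ
    set y := c * x * c⁻¹ with hy
    have hxmem : x ∈ (P : Subgroup G) := hP (Subgroup.mem_zpowers x)
    have hyQ : y ∈ Q := by
      rw [← hQPQ]
      have hmem : y ∈ (↑(c • P) : Set G) := by
        rw [Sylow.coe_smul]
        exact ⟨x, hxmem, by simp [MulAut.smul_def, hy]⟩
      rwa [hc] at hmem
    have hyord : orderOf y = 4 := by
      have horder := orderOf_injective (MulAut.conj c).toMonoidHom (MulAut.conj c).injective x
      rw [hy]
      simpa [MulAut.conj_apply] using horder.trans hxord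
    obtain ⟨k, ⟨e⟩⟩ := hQdih
    set d := e ⟨y, hyQ⟩ with hd
    have hdord : orderOf d = 4 := by
      rw [hd, e.orderOf_eq, Subgroup.orderOf_mk, hyord]
    have hcomm : ∀ q ∈ Q, y ^ 2 * q = q * y ^ 2 := by
      intro q hq
      have h1 : (⟨y, hyQ⟩ : Q) ^ 2 * ⟨q, hq⟩ = ⟨q, hq⟩ * (⟨y, hyQ⟩ : Q) ^ 2 := by
        apply e.injective
        simp only [map_mul, map_pow]
        exact dihedral_sq_central d hdord (e ⟨q, hq⟩)
      have h2 := congrArg Subtype.val h1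
      simpa using h2
    have hy2 : y ^ 2 = h := by
      rcases (hcenter (y ^ 2) (pow_mem hyQ 2)).mp hcomm with h1 | h1
      · exfalso
        have hdv : orderOf y ∣ 2 := orderOf_dvd_of_pow_eq_one h1
        rw [hyord] at hdv
        norm_num at hdv
      · exact h1
    obtain ⟨t, ht⟩ := hdvd4
    have ht0 : t ≠ 0 := by omega
    have hx2 : x ^ 2 = g ^ (2 * t) := by
      rw [hx, ← pow_mul]
      congr 1
      omega
    have hyx : y ^ 2 = c * g ^ (2 * t) * c⁻¹ := by
      rw [hy, ← hx2, pow_two, pow_two]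
      group
    have hgn2 : g ^ (2 * t) = c⁻¹ * h * c := by
      rw [← hy2, hyx]; group
    have hfix : g ^ (2 * t) = 1 := by
      apply hsemi _ (Subgroup.pow_mem _ (Subgroup.mem_zpowers g) _)
      refine ⟨QuotientGroup.mk c⁻¹, ?_⟩
      rw [MulAction.Quotient.smul_mk, QuotientGroup.eq, hgn2]
      have hsimp : ((c⁻¹ * h * c) * c⁻¹)⁻¹ * c⁻¹ = h⁻¹ := by group
      rw [smul_eq_mul, hsimp]
      exact Subgroup.inv_mem _ (Subgroup.mem_zpowers h)
    have hdd : n ∣ 2 * t := by rw [hn]; exact orderOf_dvd_of_pow_eq_one hfix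
    have hlee := Nat.le_of_dvd (by omega) hdd
    omega
  -- finish: n divides 6
  have hdvd6 : n ∣ 6 := by
    have hself := Nat.ordProj_mul_ordCompl_eq_self n 2
    have hc3 : ordCompl[2] n ∣ 3 := by
      have hcop : Nat.Coprime (ordCompl[2] n) (2 ^ m) :=
        ((Nat.coprime_ordCompl Nat.prime_two hn0).symm.pow_right m)
      exact hcop.dvd_of_dvd_mul_right ((Nat.ordCompl_dvd n 2).trans hdvd)
    have ha1 : n.factorization 2 ≤ 1 := by
      by_contra hgt
      exact h4 (dvd_trans (by
        have h22 : (2:ℕ) ^ 2 ∣ 2 ^ (n.factorization 2) := pow_dvd_pow 2 (by omega)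
        simpa using h22) (Nat.ordProj_dvd n 2))
    have hp2 : (2:ℕ) ^ (n.factorization 2) ∣ 2 := by
      calc (2:ℕ) ^ (n.factorization 2) ∣ 2 ^ 1 := pow_dvd_pow 2 ha1
        _ = 2 := by norm_num
    calc n = 2 ^ (n.factorization 2) * ordCompl[2] n := hself.symm
      _ ∣ 2 * 3 := mul_dvd_mul hp2 hc3
      _ = 6 := by norm_num
  have hle : n ≤ 6 := Nat.le_of_dvd (by norm_num) hdvd6
  clear_value n
  have h1n : 1 ≤ n := by omega
  interval_cases n <;> omega
end

section
/- Let Γ be a finite connected graph, G ≤ Aut(Γ) vertex-transitive, and N ⊴ G a normal subgroup with orbits 𝒪₁, …, 𝒪_m on the vertex set. Then there exist vertices β₁ ∈ 𝒪₁, …, β_m ∈ 𝒪_m such that the subgraph induced by Γ on {β₁, …, β_m} is connected. -/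
/-!
Among the vertex sets that meet every `N`-orbit at most once and induce a connected subgraph,
take a maximal one `X` (Zorn: a union of a chain of such sets is again one). If some orbit
were missed, a walk in `Γ` from `X` to that orbit leaves the union of the orbits of `X` along
an edge `u w`. Some `n ∈ N` maps `u` into `X`, and `n w` is then a neighbour of `X` lying in a
new orbit, so `X ∪ {n w}` contradicts maximality.
-/

open MulAction Set

theorem IsChain.injOn_sUnion {α β : Type*} {f : α → β} {c : Set (Set α)}
    (hc : IsChain (· ⊆ ·) c) (h : ∀ s ∈ c, InjOn f s) : InjOn f (⋃₀ c) := by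
  rintro a ⟨s, hs, ha⟩ b ⟨t, ht, hb⟩ hab
  obtain hst | hts := hc.total hs ht
  · exact h t ht (hst ha) hb hab
  · exact h s hs ha (hts hb) hab

namespace SimpleGraph

variable {V : Type*} {Γ : SimpleGraph V}

lemma connected_induce_sUnion_of_isChain {c : Set (Set V)} (hc : IsChain (· ⊆ ·) c)
    (hne : c.Nonempty) (h : ∀ s ∈ c, (Γ.induce s).Connected) :
    (Γ.induce (⋃₀ c)).Connected := by
  refine induce_sUnion_connected_of_pairwise_not_disjoint hne (fun hs ht => ?_) (h _ ·)
  obtain hst | hts := hc.total hs ht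
  · rw [inter_eq_left.2 hst]
    exact nonempty_coe_sort.1 (h _ hs).nonempty
  · rw [inter_eq_right.2 hts]
    exact nonempty_coe_sort.1 (h _ ht).nonempty

lemma Connected.induce_insert_of_adj {X : Set V} (hX : (Γ.induce X).Connected) {x w : V}
    (hx : x ∈ X) (hxw : Γ.Adj x w) : (Γ.induce (insert w X)).Connected := by
  have := induce_union_connected (induce_pair_connected_of_adj hxw.symm).preconnected
    hX.preconnected ⟨x, by simp, hx⟩
  rwa [insert_union, singleton_union, insert_eq_of_mem hx] at this

variable {H : Type*} [Group H] [MulAction H V]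

lemma Preconnected.exists_adj_orbit_notMem_image (hΓ : Γ.Preconnected)
    (hH : ∀ (h : H) {u w : V}, Γ.Adj u w → Γ.Adj (h • u) (h • w)) {X : Set V}
    (hX : X.Nonempty) {v : V}
    (hv : Quotient.mk (orbitRel H V) v ∉ Quotient.mk (orbitRel H V) '' X) :
    ∃ x ∈ X, ∃ w, Γ.Adj x w ∧
      Quotient.mk (orbitRel H V) w ∉ Quotient.mk (orbitRel H V) '' X := by
  obtain ⟨x₀, hx₀⟩ := hX
  obtain ⟨d, -, ⟨x, hx, hxd⟩, hd⟩ := (hΓ x₀ v).some.exists_boundary_dart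
    (Quotient.mk (orbitRel H V) ⁻¹' (Quotient.mk (orbitRel H V) '' X)) ⟨x₀, hx₀, rfl⟩ hv
  obtain ⟨h, rfl⟩ := Quotient.exact hxd
  refine ⟨h • d.fst, hx, h • d.snd, hH h d.adj, ?_⟩
  rwa [Quotient.sound (mem_orbit d.snd h)]

theorem Connected.exists_bijOn_orbit_connected_induce (hΓ : Γ.Connected)
    (hH : ∀ (h : H) {u w : V}, Γ.Adj u w → Γ.Adj (h • u) (h • w)) :
    ∃ X : Set V, BijOn (Quotient.mk (orbitRel H V)) X univ ∧ (Γ.induce X).Connected := by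
  obtain ⟨v₀⟩ := hΓ.nonempty
  obtain ⟨X, -, hXmax⟩ := zorn_subset_nonempty
    {X | InjOn (Quotient.mk (orbitRel H V)) X ∧ (Γ.induce X).Connected}
    (fun c hcS hc hne => ⟨⋃₀ c, ⟨hc.injOn_sUnion fun s hs => (hcS hs).1,
      connected_induce_sUnion_of_isChain hc hne fun s hs => (hcS hs).2⟩,
      fun _ => subset_sUnion_of_mem⟩)
    {v₀} ⟨injOn_singleton _ _, Connected.of_subsingleton⟩
  obtain ⟨hXinj, hXconn⟩ := hXmax.prop
  refine ⟨X, ⟨mapsTo_univ _ _, hXinj, ?_⟩, hXconn⟩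
  rintro q -
  obtain ⟨v, rfl⟩ := Quotient.mk_surjective q
  by_contra hv
  obtain ⟨x, hx, w, hxw, hw⟩ := hΓ.preconnected.exists_adj_orbit_notMem_image hH
    (nonempty_coe_sort.1 hXconn.nonempty) hv
  have hwX : w ∉ X := fun hwX => hw ⟨w, hwX, rfl⟩
  exact hwX <| hXmax.2 ⟨(injOn_insert hwX).2 ⟨hXinj, hw⟩, hXconn.induce_insert_of_adj hx hxw⟩
    (subset_insert w X) (mem_insert w X)

end SimpleGraph

theorem stmt13_general {V : Type*} (Γ : SimpleGraph V) (hconn : Γ.Connected)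
    (G N : Subgroup (Equiv.Perm V))
    (hG : ∀ g ∈ G, ∀ u w : V, Γ.Adj (g u) (g w) ↔ Γ.Adj u w)
    (hNG : N ≤ G) :
    ∃ X : Set V, (∀ v : V, ∃! x : V, x ∈ X ∧ x ∈ MulAction.orbit N v) ∧
      (Γ.induce X).Connected := by
  obtain ⟨X, hX, hXconn⟩ := hconn.exists_bijOn_orbit_connected_induce (H := N)
    fun n u w huw => (hG n (hNG n.2) u w).2 huw
  refine ⟨X, fun v => ?_, hXconn⟩
  obtain ⟨x, hx, hxv⟩ := hX.surjOn (mem_univ (Quotient.mk (orbitRel N V) v))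
  exact ⟨x, ⟨hx, Quotient.exact hxv⟩, fun y ⟨hy, hyv⟩ =>
    hX.injOn hy hx ((Quotient.sound hyv).trans hxv.symm)⟩

/-- If `N` is a normal subgroup of a vertex-transitive group of automorphisms of a finite
connected graph, then one can pick one vertex from each `N`-orbit so that the induced
subgraph on the chosen vertices is connected. -/
theorem stmt13 {V : Type*} [Fintype V] (Γ : SimpleGraph V) (hconn : Γ.Connected)
    (G N : Subgroup (Equiv.Perm V))
    (hG : ∀ g ∈ G, ∀ u w : V, Γ.Adj (g u) (g w) ↔ Γ.Adj u w)
    (htrans : ∀ u w : V, ∃ g ∈ G, g u = w)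
    (hNG : N ≤ G) (hnorm : ∀ g ∈ G, ∀ n ∈ N, g * n * g⁻¹ ∈ N) :
    ∃ X : Set V, (∀ v : V, ∃! x : V, x ∈ X ∧ x ∈ MulAction.orbit N v) ∧
      (Γ.induce X).Connected :=
  stmt13_general Γ hconn G N hG hNG
end

section
/- Let Γ be a finite connected cubic graph, G ≤ Aut(Γ) vertex-transitive, and N ⊴ G such that the quotient graph Γ/N (whose vertices are the N-orbits, with two distinct orbits adjacent iff some vertex of one is adjacent in Γ to some vertex of the other) is also cubic. Then N acts semiregularly on the vertices of Γ. -/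
/-!
Since `N` preserves adjacency, every neighbour of the orbit of `α` in `Γ/N` is the orbit of a
neighbour of `α`. Both graphs being cubic, the three neighbours of `α` lie in three distinct
`N`-orbits. Hence an element of `N` fixing `α` permutes the neighbours of `α` within their
orbits, so fixes each of them; by connectedness it fixes every vertex.
-/

theorem Set.injOn_of_subset_image_of_ncard_le {α β : Type*} {f : α → β} {s : Set α}
    {t : Set β} (hs : s.Finite) (hts : t ⊆ f '' s) (hcard : s.ncard ≤ t.ncard) :
    s.InjOn f :=
  Set.injOn_of_ncard_image_eq
    (le_antisymm (Set.ncard_image_le hs) (hcard.trans (Set.ncard_le_ncard hts (hs.image f)))) hs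

namespace SimpleGraph

variable {V : Type*} {Γ : SimpleGraph V}

theorem Reachable.of_forall_adj_imp {p : V → Prop} (hp : ∀ u w, Γ.Adj u w → p u → p w)
    {u v : V} (huv : Γ.Reachable u v) (hu : p u) : p v := by
  rw [reachable_iff_reflTransGen] at huv
  induction huv with
  | refl => exact hu
  | tail _ hadj ih => exact hp _ _ hadj ih

section OrbitQuotient

variable {H : Type*} [Group H] [MulAction H V]
  {Δ : SimpleGraph (Quotient (MulAction.orbitRel H V))}

local notation "π" => Quotient.mk (MulAction.orbitRel H V)

theorem neighborSet_orbit_subset_image_neighborSet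
    (hΓ : ∀ h : H, ∀ u w, Γ.Adj u w → Γ.Adj (h • u) (h • w))
    (hΔ : ∀ A B, Δ.Adj A B → ∃ a b, π a = A ∧ π b = B ∧ Γ.Adj a b) (u : V) :
    Δ.neighborSet (π u) ⊆ π '' Γ.neighborSet u := by
  intro B hB
  obtain ⟨a, b, ha, rfl, hab⟩ := hΔ _ B hB
  obtain ⟨h, rfl⟩ := Quotient.exact ha
  exact ⟨h⁻¹ • b, by simpa using hΓ h⁻¹ _ _ hab, Quotient.sound ⟨h⁻¹, rfl⟩⟩

theorem smul_eq_self_of_adj_of_injOn {u w : V} {h : H}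
    (hΓ : ∀ u w, Γ.Adj u w → Γ.Adj (h • u) (h • w)) (hinj : (Γ.neighborSet u).InjOn π)
    (hu : h • u = u) (huw : Γ.Adj u w) : h • w = w := by
  have hhw : Γ.Adj u (h • w) := hu ▸ hΓ u w huw
  exact hinj hhw huw (Quotient.sound ⟨h, rfl⟩)

theorem smul_eq_self_of_connected (hconn : Γ.Connected)
    (hΓ : ∀ h : H, ∀ u w, Γ.Adj u w → Γ.Adj (h • u) (h • w))
    (hΔ : ∀ A B, Δ.Adj A B → ∃ a b, π a = A ∧ π b = B ∧ Γ.Adj a b)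
    (hfin : ∀ u, (Γ.neighborSet u).Finite)
    (hcard : ∀ u, (Γ.neighborSet u).ncard ≤ (Δ.neighborSet (π u)).ncard)
    {h : H} {v : V} (hv : h • v = v) (x : V) : h • x = x :=
  (hconn.preconnected v x).of_forall_adj_imp
    (fun u _ huw hu => smul_eq_self_of_adj_of_injOn (hΓ h) (Set.injOn_of_subset_image_of_ncard_le
      (hfin u) (neighborSet_orbit_subset_image_neighborSet hΓ hΔ u) (hcard u)) hu huw) hv

end OrbitQuotient

end SimpleGraph

theorem stmt14_general {V : Type*} (Γ : SimpleGraph V) (hconn : Γ.Connected)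
    (hcubic : ∀ v : V, (Γ.neighborSet v).ncard = 3)
    (G N : Subgroup (Equiv.Perm V))
    (hG : ∀ g ∈ G, ∀ u w : V, Γ.Adj (g u) (g w) ↔ Γ.Adj u w)
    (hNG : N ≤ G)
    (Δ : SimpleGraph (Quotient (MulAction.orbitRel N V)))
    (hΔ : ∀ A B : Quotient (MulAction.orbitRel N V), Δ.Adj A B ↔
      A ≠ B ∧ ∃ a b : V, Quotient.mk (MulAction.orbitRel N V) a = A ∧
        Quotient.mk (MulAction.orbitRel N V) b = B ∧ Γ.Adj a b)
    (hΔcubic : ∀ A : Quotient (MulAction.orbitRel N V), (Δ.neighborSet A).ncard = 3) :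
    ∀ n ∈ N, ∀ v : V, n v = v → n = 1 := by
  intro n hn v hv
  have hN : ∀ m : N, ∀ u w, Γ.Adj u w → Γ.Adj (m • u) (m • w) :=
    fun m u w => (hG m (hNG m.2) u w).2
  have hfin : ∀ u, (Γ.neighborSet u).Finite :=
    fun u => Set.finite_of_ncard_ne_zero (by rw [hcubic u]; decide)
  ext x
  exact SimpleGraph.smul_eq_self_of_connected (h := ⟨n, hn⟩) hconn hN
    (fun A B hAB => ((hΔ A B).1 hAB).2) hfin (fun u => by rw [hcubic, hΔcubic]) hv x

/-- If the quotient of a finite connected cubic graph by the orbits of a normal subgroup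
`N` of a vertex-transitive automorphism group is again cubic, then `N` acts semiregularly
on the vertices. -/
theorem stmt14 {V : Type*} [Fintype V] (Γ : SimpleGraph V) (hconn : Γ.Connected)
    (hcubic : ∀ v : V, (Γ.neighborSet v).ncard = 3)
    (G N : Subgroup (Equiv.Perm V))
    (hG : ∀ g ∈ G, ∀ u w : V, Γ.Adj (g u) (g w) ↔ Γ.Adj u w)
    (htrans : ∀ u w : V, ∃ g ∈ G, g u = w)
    (hNG : N ≤ G) (hnorm : ∀ g ∈ G, ∀ n ∈ N, g * n * g⁻¹ ∈ N)
    (Δ : SimpleGraph (Quotient (MulAction.orbitRel N V)))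
    (hΔ : ∀ A B : Quotient (MulAction.orbitRel N V), Δ.Adj A B ↔
      A ≠ B ∧ ∃ a b : V, Quotient.mk (MulAction.orbitRel N V) a = A ∧
        Quotient.mk (MulAction.orbitRel N V) b = B ∧ Γ.Adj a b)
    (hΔcubic : ∀ A : Quotient (MulAction.orbitRel N V), (Δ.neighborSet A).ncard = 3) :
    ∀ n ∈ N, ∀ v : V, n v = v → n = 1 :=
  stmt14_general Γ hconn hcubic G N hG hNG Δ hΔ hΔcubic
end

section
/- For every ℓ ≥ 1, every elementary abelian 3-subgroup of GL_ℓ(𝔽₂) has order at most 3^{⌊ℓ/2⌋}. -/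
/-!
Induct on `dim V`. If `A` preserves a nontrivial decomposition `V = W₁ ⊕ W₂`, it embeds into the
product of its images in `GL(W₁)` and `GL(W₂)`, and the bound follows from those for `W₁` and
`W₂`. Each `g ∈ A` yields such a decomposition `V = ker (g - 1) ⊕ ker (g² + g + 1)`, as
`X - 1` and `X² + X + 1` are coprime and `A` is abelian. So it remains to treat the case where
every `g ≠ 1` in `A` is fixed-point free, hence satisfies `g² + g + 1 = 0`. Fix such a `g`. For
`h ∉ {1, g}` the map `h - g = (h g⁻¹ - 1) g` is injective and `(h - g)(h - g²) = 0`, so `h = g²`;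
thus `|A| ≤ 3`, while `dim V ≥ 2` because `X² + X + 1` has no root in the field.
-/

open Module LinearMap Polynomial

section CubeRoots

variable {K V : Type*} [Field K] [AddCommGroup V] [Module K V]

lemma isCoprime_X_sub_one_X_sq_add_X_add_one (hK : ∀ c : K, c ^ 2 + c + 1 ≠ 0) :
    IsCoprime (X - C 1 : K[X]) (X ^ 2 + X + 1) :=
  (irreducible_X_sub_C 1).coprime_iff_not_dvd.mpr <| by
    rw [dvd_iff_isRoot, IsRoot.def]
    simpa using hK 1

lemma isCompl_ker_sub_one_ker_sq_add_self_add_one (hK : ∀ c : K, c ^ 2 + c + 1 ≠ 0)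
    {f : Module.End K V} (hf : f ^ 3 = 1) :
    IsCompl (ker (f - 1)) (ker (f ^ 2 + f + 1)) := by
  have hpq := isCoprime_X_sub_one_X_sq_add_X_add_one hK
  have hsup := sup_ker_aeval_eq_ker_aeval_mul_of_coprime f hpq
  have hdisj := disjoint_ker_aeval_of_isCoprime f hpq
  have hprod : (X - C 1) * (X ^ 2 + X + 1 : K[X]) = X ^ 3 - 1 := by rw [C_1]; ring
  rw [hprod] at hsup
  simp only [map_sub, map_add, map_pow, aeval_X, map_one, hf, sub_self, ker_zero]
    at hsup hdisj
  exact ⟨hdisj, codisjoint_iff.mpr hsup⟩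

lemma two_le_finrank_of_sq_add_self_add_one_eq_zero (hK : ∀ c : K, c ^ 2 + c + 1 ≠ 0)
    [FiniteDimensional K V] [Nontrivial V] {f : Module.End K V} (hf : f ^ 2 + f + 1 = 0) :
    2 ≤ finrank K V := by
  obtain ⟨v, hv⟩ := exists_ne (0 : V)
  by_contra! hlt
  have hone : finrank K V = 1 := by have := finrank_pos (R := K) (M := V); omega
  obtain ⟨c, hc⟩ := (finrank_eq_one_iff_of_nonzero' v hv).mp hone (f v)
  have key : (f ^ 2 + f + 1 : Module.End K V) v = (c ^ 2 + c + 1) • v := by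
    simp only [LinearMap.add_apply, sq, Module.End.mul_apply, Module.End.one_apply, ← hc,
      map_smul, smul_smul, add_smul, one_smul]
  rw [hf, LinearMap.zero_apply, eq_comm, smul_eq_zero] at key
  exact hK c (key.resolve_right hv)

end CubeRoots

section Endomorphisms

variable {R V : Type*} [CommRing R] [AddCommGroup V] [Module R V]

lemma sq_add_self_add_one_eq_zero {f : Module.End R V} (hf : f ^ 3 = 1)
    (hfix : ker (f - 1) = ⊥) : f ^ 2 + f + 1 = 0 := by
  have h : (f - 1) * (f ^ 2 + f + 1) = 0 := by
    rw [show (f - 1) * (f ^ 2 + f + 1) = f ^ 3 - 1 by noncomm_ring, hf, sub_self]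
  ext v
  exact ker_eq_bot'.mp hfix _ congr($h v)

lemma eq_sq_of_injective_sub {f g : Module.End R V} (hfg : Commute f g)
    (hf : f ^ 2 + f + 1 = 0) (hg : g ^ 2 + g + 1 = 0) (hinj : Function.Injective (g - f)) :
    g = f ^ 2 := by
  have h : (g - f) * (g - f ^ 2) = 0 := by
    have : (g - f) * (g - f ^ 2) =
        (g ^ 2 + g + 1) - g * (f ^ 2 + f + 1) + (f - 1) * (f ^ 2 + f + 1) + (g * f - f * g) := by
      noncomm_ring
    rw [this, hf, hg, hfg.eq]; simp
  rw [← sub_eq_zero]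
  ext v
  exact hinj (by simpa using congr($h v))

end Endomorphisms

lemma index_ker_eq_card_range {G M : Type*} [Group G] [Monoid M] (f : G →* M) :
    f.ker.index = Nat.card (Set.range f) := by
  rw [← f.ker_toHomUnits, Subgroup.index_ker, ← SetLike.coe_sort_coe, MonoidHom.coe_range,
    ← Nat.card_image_of_injective Units.val_injective, ← Set.range_comp]
  rfl

lemma Subrepresentation.toRepresentation_eq_one_iff {K G V : Type*} [Semiring K] [Monoid G]
    [AddCommMonoid V] [Module K V] {ρ : Representation K G V} (σ : Subrepresentation ρ) (g : G) :
    σ.toRepresentation g = 1 ↔ σ.toSubmodule ≤ eqLocus (ρ g) 1 := by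
  refine ⟨fun h v hv => congr(($h ⟨v, hv⟩ : V)), fun h => ?_⟩
  ext ⟨v, hv⟩
  exact h hv

namespace Representation

section Group

variable {K G V : Type*} [Semiring K] [Group G] [AddCommMonoid V] [Module K V]
  {ρ : Representation K G V}

lemma ker_eq_inf_of_sup_eq_top {σ₁ σ₂ : Subrepresentation ρ}
    (h : σ₁.toSubmodule ⊔ σ₂.toSubmodule = ⊤) :
    ρ.ker = σ₁.toRepresentation.ker ⊓ σ₂.toRepresentation.ker := by
  ext g
  simp only [Subgroup.mem_inf, MonoidHom.mem_ker, Subrepresentation.toRepresentation_eq_one_iff,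
    ← sup_le_iff, h, top_le_iff, eqLocus_eq_top]

end Group

variable {K G V : Type*} [Field K] [CommGroup G] [AddCommGroup V] [Module K V]
  (ρ : Representation K G V)

lemma commute_apply (g h : G) : Commute (ρ g) (ρ h) := by
  rw [Commute, SemiconjBy, ← map_mul, mul_comm, map_mul]

-- The zero representation counts as indecomposable.
def IsIndecomposable : Prop :=
  ∀ σ₁ σ₂ : Subrepresentation ρ, IsCompl σ₁.toSubmodule σ₂.toSubmodule →
    σ₁.toSubmodule = ⊥ ∨ σ₂.toSubmodule = ⊥

def subrepresentationKer (e : Module.End K V) (he : ∀ g, Commute (ρ g) e) :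
    Subrepresentation ρ where
  toSubmodule := ker e
  apply_mem_toSubmodule g v hv := by
    rw [mem_ker] at hv ⊢
    rw [← Module.End.mul_apply, ← (he g).eq, Module.End.mul_apply, hv, map_zero]

lemma ker_apply_sub_one_eq_bot (hK : ∀ c : K, c ^ 2 + c + 1 ≠ 0) (hexp : ∀ g : G, g ^ 3 = 1)
    (hindec : ρ.IsIndecomposable) {g : G} (hg : ρ g ≠ 1) : ker (ρ g - 1) = ⊥ := by
  have hcube : ρ g ^ 3 = 1 := by rw [← map_pow, hexp, map_one]
  have hcompl := isCompl_ker_sub_one_ker_sq_add_self_add_one hK hcube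
  have hcomm := ρ.commute_apply
  refine (hindec (ρ.subrepresentationKer _ fun h => (hcomm h g).sub_right (.one_right _))
    (ρ.subrepresentationKer _ fun h => (((hcomm h g).pow_right 2).add_right (hcomm h g)).add_right
      (.one_right _)) hcompl).resolve_right fun hbot => hg ?_
  rw [← sub_eq_zero, ← ker_eq_top]
  exact eq_top_of_isCompl_bot (hbot ▸ hcompl)

lemma range_subset_of_ker_apply_sub_one_eq_bot (hexp : ∀ g : G, g ^ 3 = 1)
    (hfix : ∀ g, ρ g ≠ 1 → ker (ρ g - 1) = ⊥) {g : G} (hg : ρ g ≠ 1) :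
    Set.range ρ ⊆ {1, ρ g, ρ g ^ 2} := by
  have hquad (h : G) (h1 : ρ h ≠ 1) : ρ h ^ 2 + ρ h + 1 = 0 :=
    sq_add_self_add_one_eq_zero (by rw [← map_pow, hexp, map_one]) (hfix h h1)
  rintro _ ⟨h, rfl⟩
  by_cases h1 : ρ h = 1
  · simp [h1]
  by_cases h2 : ρ h = ρ g
  · simp [h2]
  have hne : ρ (h * g⁻¹) ≠ 1 := fun h' => h2 <| by
    rw [← inv_mul_cancel_right h g, map_mul, h', one_mul]
  have hinj : Function.Injective (ρ h - ρ g) := by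
    rw [show ρ h - ρ g = (ρ (h * g⁻¹) - 1) * ρ g by
      rw [sub_mul, one_mul, ← map_mul, inv_mul_cancel_right]]
    exact (ker_eq_bot.mp (hfix _ hne)).comp (ρ.apply_bijective g).injective
  simp [eq_sq_of_injective_sub (ρ.commute_apply g h) (hquad g hg) (hquad h h1) hinj]

lemma index_ker_le_of_ker_apply_sub_one_eq_bot [FiniteDimensional K V]
    (hK : ∀ c : K, c ^ 2 + c + 1 ≠ 0) (hexp : ∀ g : G, g ^ 3 = 1)
    (hfix : ∀ g, ρ g ≠ 1 → ker (ρ g - 1) = ⊥) : ρ.ker.index ≤ 3 ^ (finrank K V / 2) := by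
  by_cases htriv : ∀ g, ρ g = 1
  · rw [show ρ.ker = ⊤ from eq_top_iff.mpr fun g _ => htriv g, Subgroup.index_top]
    exact Nat.one_le_pow _ _ three_pos
  push Not at htriv
  obtain ⟨g, hg⟩ := htriv
  have : Nontrivial V := by
    by_contra hV
    rw [not_nontrivial_iff_subsingleton] at hV
    exact hg (Subsingleton.elim _ _)
  have hdim := two_le_finrank_of_sq_add_self_add_one_eq_zero hK <|
    sq_add_self_add_one_eq_zero (by rw [← map_pow, hexp, map_one]) (hfix g hg)
  calc ρ.ker.index = Nat.card (Set.range ρ) := index_ker_eq_card_range ρ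
    _ ≤ Nat.card ({1, ρ g, ρ g ^ 2} : Set _) :=
      Nat.card_mono (Set.toFinite _) (ρ.range_subset_of_ker_apply_sub_one_eq_bot hexp hfix hg)
    _ ≤ 3 := by
      rw [Nat.card_coe_set_eq]
      grw [Set.ncard_insert_le, Set.ncard_insert_le, Set.ncard_singleton]
    _ ≤ 3 ^ (finrank K V / 2) := le_self_pow (by norm_num) (by omega)

theorem index_ker_le_three_pow [FiniteDimensional K V] (hK : ∀ c : K, c ^ 2 + c + 1 ≠ 0)
    (hexp : ∀ g : G, g ^ 3 = 1) : ρ.ker.index ≤ 3 ^ (finrank K V / 2) := by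
  induction hn : finrank K V using Nat.strong_induction_on generalizing V with
  | _ n ih =>
  by_cases hindec : ρ.IsIndecomposable
  · exact hn ▸ ρ.index_ker_le_of_ker_apply_sub_one_eq_bot hK hexp
      fun g hg => ρ.ker_apply_sub_one_eq_bot hK hexp hindec hg
  rw [IsIndecomposable] at hindec
  push Not at hindec
  obtain ⟨σ₁, σ₂, hcompl, h₁, h₂⟩ := hindec
  have hdim := Submodule.finrank_add_eq_of_isCompl hcompl
  have hpos₁ := Submodule.finrank_eq_zero.not.mpr h₁
  have hpos₂ := Submodule.finrank_eq_zero.not.mpr h₂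
  calc ρ.ker.index
      ≤ σ₁.toRepresentation.ker.index * σ₂.toRepresentation.ker.index := by
        rw [ker_eq_inf_of_sup_eq_top hcompl.sup_eq_top]
        exact Subgroup.index_inf_le
    _ ≤ 3 ^ (finrank K σ₁.toSubmodule / 2) * 3 ^ (finrank K σ₂.toSubmodule / 2) :=
        Nat.mul_le_mul (ih _ (by omega) _ rfl) (ih _ (by omega) _ rfl)
    _ ≤ 3 ^ (n / 2) := by
        rw [← pow_add]
        exact Nat.pow_le_pow_right three_pos (by omega)

end Representation

theorem stmt15_general (ℓ : ℕ)
    (A : Subgroup (Matrix.GeneralLinearGroup (Fin ℓ) (ZMod 2)))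
    (habelian : ∀ x ∈ A, ∀ y ∈ A, x * y = y * x)
    (hexp : ∀ x ∈ A, x ^ 3 = 1) :
    Nat.card A ≤ 3 ^ (ℓ / 2) := by
  let : CommGroup A := { mul_comm := fun a b => Subtype.ext (habelian a a.2 b b.2) }
  let ρ : Representation (ZMod 2) A (Fin ℓ → ZMod 2) :=
    (Matrix.toLinAlgEquiv' : _ ≃ₐ[ZMod 2] _).toMonoidHom.comp ((Units.coeHom _).comp A.subtype)
  have hρ : ρ.ker = ⊥ := (MonoidHom.ker_eq_bot_iff ρ).mpr <|
    Matrix.toLinAlgEquiv'.injective.comp (Units.val_injective.comp A.subtype_injective)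
  have := ρ.index_ker_le_three_pow (by decide) fun a => Subtype.ext (hexp a a.2)
  rwa [hρ, Subgroup.index_bot, Module.finrank_fin_fun] at this

/-- An elementary abelian 3-subgroup of `GL_ℓ(𝔽₂)` has order at most `3^⌊ℓ/2⌋`. -/
theorem stmt15 (ℓ : ℕ) (hl : 1 ≤ ℓ)
    (A : Subgroup (Matrix.GeneralLinearGroup (Fin ℓ) (ZMod 2)))
    (habelian : ∀ x ∈ A, ∀ y ∈ A, x * y = y * x)
    (hexp : ∀ x ∈ A, x ^ 3 = 1) :
    Nat.card A ≤ 3 ^ (ℓ / 2) :=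
  stmt15_general ℓ A habelian hexp
end

section
/- Let V be the extraspecial group of exponent 3 and order 3^{2^m+1} (m ≥ 1) defined by generators v₁,…,v_{2^m}, z with relations v_i³ = z³ = [v_i,z] = 1 and [v_i,v_j] = z^{J_{i,j}}, where J_{i,j} = (−1)^{i−j} for i>j, −(−1)^{j−i} for j>i, 0 for i=j. Then the map a sending v_i ↦ v_{i+1} for i < 2^m, v_{2^m} ↦ v₁^{−1}, z ↦ z extends to an automorphism of V of order 2^{m+1}, and the map b sending v₁ ↦ v₁^{−1}, v_i ↦ v_{2^m−i+2} for i ≥ 2, z ↦ z^{−1} extends to an automorphism of order 2, satisfying bab = a^{−1}; hence ⟨a,b⟩ is dihedral of order 2^{m+2}. -/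
/-!
Every element of `V` has a unique normal form `z ^ c * v₀ ^ e₀ * ⋯ * vₙ₋₁ ^ eₙ₋₁` with
exponents in `ZMod 3`: such products are closed under multiplication,
`z^c w(e) · z^d w(f) = z^(c + d + ω(e, f)) w(e + f)` for a bilinear form `ω` whose
antisymmetrisation is the commutator form `∑ eᵢ fⱼ Jᵢⱼ`, and there are exactly `|V|` of them.
Hence a signed permutation `α` of the exponents that multiplies the commutator form by
`ε = ±1` lifts to the automorphism `(c, e) ↦ (ε c - D(e, e), α e)` of `V`, where
`D(e, f) = ω(α e, α f) - ε ω(e, f)` is symmetric. The maps `a` and `b` are the signed cyclic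
shift (`ε = 1`) and the signed reversal (`ε = -1`); writing `Jᵢⱼ = (-1)^(i+j) sgn(i - j)` turns
the invariance into a parity check that uses that `2^m` is even. Finally `a^(2^m)` inverts every
`vᵢ`, `b² = 1` and `(ba)² = 1` hold on the generators, and two such elements generate a dihedral
group.
-/

namespace ExtraspecialAut

section Powers
variable {G : Type*} [Group G]

lemma mul_pow_eq_of_mul_eq {x y c : G} (hc : ∀ g, Commute c g) (h : x * y = y * x * c)
    (b : ℕ) : x * y ^ b = y ^ b * x * c ^ b := by
  have hs : SemiconjBy x y (y * c) := by
    rw [SemiconjBy, h, mul_assoc, mul_assoc, (hc x).eq]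
  rw [(hs.pow_right b).eq, (hc y).symm.mul_pow, mul_assoc, ((hc x).pow_left b).eq, mul_assoc]

lemma pow_mul_pow_eq_of_mul_eq {x y c : G} (hc : ∀ g, Commute c g) (h : x * y = y * x * c)
    (a b : ℕ) : x ^ a * y ^ b = y ^ b * x ^ a * c ^ (a * b) := by
  have hcb : ∀ g, Commute (c ^ b) g := fun g => (hc g).pow_left b
  have hs : SemiconjBy (y ^ b) (x * c ^ b) x := by
    rw [SemiconjBy, mul_pow_eq_of_mul_eq hc h, mul_assoc]
  rw [← (hs.pow_right a).eq, (hcb x).symm.mul_pow, ← pow_mul, mul_comm b, mul_assoc]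

variable {k : ℕ} {g : G}

lemma pow_eq_pow_val (hg : g ^ k = 1) {n : ℕ} {x : ZMod k} (h : (n : ZMod k) = x) :
    g ^ n = g ^ x.val := by
  rw [pow_eq_pow_mod n hg, ← ZMod.val_natCast, h]

lemma pow_val_add [NeZero k] (hg : g ^ k = 1) (x y : ZMod k) :
    g ^ (x + y).val = g ^ x.val * g ^ y.val := by
  rw [← pow_add]
  exact (pow_eq_pow_val hg (by simp)).symm

lemma pow_val_intCast [NeZero k] (hg : g ^ k = 1) (t : ℤ) :
    g ^ (t : ZMod k).val = g ^ t := by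
  rw [← zpow_natCast, ZMod.val_intCast, ← zpow_eq_zpow_emod' _ hg]

lemma pow_val_neg [NeZero k] (hg : g ^ k = 1) (t : ZMod k) : g ^ (-t).val = (g ^ t.val)⁻¹ :=
  eq_inv_of_mul_eq_one_left (by rw [← pow_val_add hg, neg_add_cancel, ZMod.val_zero, pow_zero])

end Powers

lemma mem_center_of_closure_eq_top {G : Type*} [Group G] {s : Set G} {z : G}
    (hs : Subgroup.closure s = ⊤) (h : ∀ g ∈ s, g * z = z * g) : z ∈ Subgroup.center G := by
  rw [← Subgroup.centralizer_univ, ← Subgroup.coe_top, ← hs, Subgroup.centralizer_closure]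
  exact Subgroup.mem_centralizer_iff.mpr h

lemma mulAut_ext_of_closure {V ι : Type*} [Group V] {v : ι → V} {z : V}
    (hgen : Subgroup.closure (Set.range v ∪ {z}) = ⊤) {f g : MulAut V}
    (hfv : ∀ i, f (v i) = g (v i)) (hfz : f z = g z) : f = g := by
  refine MulEquiv.toMonoidHom_injective (MonoidHom.eq_of_eqOn_dense hgen ?_)
  rintro _ (⟨i, rfl⟩ | rfl)
  exacts [hfv i, hfz]

section CrossForm
variable {ι R : Type*} [CommRing R] (C : ι → ι → R)

def crossForm : List ι → (ι → R) → (ι → R) → R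
  | [], _, _ => 0
  | i :: L, e, f => f i * (L.map fun j => e j * C j i).sum + crossForm L e f

lemma crossForm_add_left (L : List ι) (e e' f : ι → R) :
    crossForm C L (e + e') f = crossForm C L e f + crossForm C L e' f := by
  induction L with
  | nil => simp [crossForm]
  | cons i L ih =>
    simp only [crossForm, Pi.add_apply, ih, add_mul, List.sum_map_add]
    ring

lemma crossForm_add_right (L : List ι) (e f f' : ι → R) :
    crossForm C L e (f + f') = crossForm C L e f + crossForm C L e f' := by
  induction L with
  | nil => simp [crossForm]
  | cons i L ih =>
    simp only [crossForm, Pi.add_apply, ih]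
    ring

variable {C}

lemma crossForm_sub_swap (hanti : ∀ i j, C j i = -C i j) (hdiag : ∀ i, C i i = 0)
    (L : List ι) (e f : ι → R) :
    crossForm C L e f - crossForm C L f e =
      (L.map fun a => (L.map fun b => e a * f b * C a b).sum).sum := by
  induction L with
  | nil => simp [crossForm]
  | cons i L ih =>
    have hrow :
        (L.map fun b => e i * f b * C i b).sum = -e i * (L.map fun j => f j * C j i).sum := by
      rw [← List.sum_map_mul_left]
      exact congrArg List.sum (List.map_congr_left fun b _ => by rw [hanti b i]; ring)
    have hcol :
        (L.map fun a => e a * f i * C a i).sum = f i * (L.map fun j => e j * C j i).sum := by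
      rw [← List.sum_map_mul_left]
      exact congrArg List.sum (List.map_congr_left fun a _ => by ring)
    simp only [crossForm, List.map_cons, List.sum_cons, List.sum_map_add, hdiag, hrow, hcol]
    linear_combination ih

lemma crossForm_single_single [DecidableEq ι] (hdiag : ∀ i, C i i = 0) (L : List ι) (j : ι)
    (s t : R) : crossForm C L (Pi.single j s) (Pi.single j t) = 0 := by
  induction L with
  | nil => rfl
  | cons i L ih =>
    rw [crossForm, ih, add_zero]
    rcases eq_or_ne i j with rfl | hij
    · refine mul_eq_zero_of_right _ (List.sum_eq_zero fun x hx => ?_)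
      obtain ⟨j, -, rfl⟩ := List.mem_map.mp hx
      rcases eq_or_ne j i with rfl | hji
      · simp [hdiag]
      · simp [hji]
    · simp [hij]

end CrossForm

section Words
variable {V ι : Type*} [Group V] {k : ℕ} (v : ι → V)

def word (L : List ι) (e : ι → ZMod k) : V := (L.map fun i => v i ^ (e i).val).prod

@[simp]
lemma word_cons (i : ι) (L : List ι) (e : ι → ZMod k) :
    word v (i :: L) e = v i ^ (e i).val * word v L e := rfl

variable {v} [NeZero k] {C : ι → ι → ZMod k} {z : V} (hv : ∀ i, v i ^ k = 1)
  (hz : z ^ k = 1) (hzc : ∀ g, Commute z g)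
  (hC : ∀ i j, v i * v j = v j * v i * z ^ (C i j).val)
include hz hzc hC

lemma pow_val_mul_pow_val (i j : ι) (a b : ZMod k) :
    v i ^ a.val * v j ^ b.val = v j ^ b.val * v i ^ a.val * z ^ (a * b * C i j).val := by
  rw [pow_mul_pow_eq_of_mul_eq (fun g => (hzc g).pow_left _) (hC i j), ← pow_mul,
    pow_eq_pow_val hz (x := a * b * C i j) (by simp [mul_comm])]

lemma word_mul_pow_val (L : List ι) (e : ι → ZMod k) (i : ι) (t : ZMod k) :
    word v L e * v i ^ t.val =
      v i ^ t.val * word v L e * z ^ (t * (L.map fun j => e j * C j i).sum).val := by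
  induction L with
  | nil => simp [word]
  | cons j L ih =>
    rw [word_cons, List.map_cons, List.sum_cons, mul_assoc, ih, ← mul_assoc, ← mul_assoc,
      pow_val_mul_pow_val hz hzc hC, mul_add, pow_val_add hz, mul_comm t,
      show e j * t * C j i = t * (e j * C j i) by ring, mul_assoc (_ * _) (z ^ _),
      ((hzc _).pow_left _).eq]
    simp only [mul_assoc]

include hv in
lemma word_mul_word (L : List ι) (e f : ι → ZMod k) :
    word v L e * word v L f = z ^ (crossForm C L e f).val * word v L (e + f) := by
  induction L with
  | nil => simp [word, crossForm]
  | cons i L ih =>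
    have hcomm : ∀ (n : ℕ) (g : V), z ^ n * g = g * z ^ n := fun n g => ((hzc g).pow_left n).eq
    rw [word_cons, word_cons, word_cons, crossForm, mul_assoc, ← mul_assoc (word v L e),
      word_mul_pow_val hz hzc hC, mul_assoc, mul_assoc, hcomm, ← mul_assoc (word v L e), ih,
      Pi.add_apply, pow_val_add (hv i), pow_val_add hz]
    conv_lhs => rw [hcomm (crossForm C L e f).val]
    conv_rhs => rw [mul_assoc (z ^ _), hcomm (crossForm C L e f).val, hcomm]
    simp only [mul_assoc]

end Words

section NormalForm
variable {V ι R : Type*} [Group V] [Fintype ι] [CommRing R]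

def cocycleMul {M : Type*} [AddCommGroup M] (ω : M →+ M →+ R) (p q : R × M) : R × M :=
  (p.1 + q.1 + ω p.2 q.2, p.2 + q.2)

noncomputable def cross (C : ι → ι → R) : (ι → R) →+ (ι → R) →+ R :=
  AddMonoidHom.mk'
    (fun e => AddMonoidHom.mk' (crossForm C Finset.univ.toList e) (crossForm_add_right C _ e))
    fun e e' => AddMonoidHom.ext fun f => crossForm_add_left C _ e e' f

variable {k : ℕ}

noncomputable def normalForm (v : ι → V) (z : V) (p : ZMod k × (ι → ZMod k)) : V :=
  z ^ p.1.val * word v Finset.univ.toList p.2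

variable {v : ι → V} {z : V}

lemma normalForm_zero_single [DecidableEq ι] (i : ι) (t : ZMod k) :
    normalForm v z (0, Pi.single i t) = v i ^ t.val := by
  rw [normalForm, word, List.prod_map_eq_pow_single i _ fun j hj _ => by simp [hj],
    List.count_eq_one_of_mem (Finset.nodup_toList _) (Finset.mem_toList.mpr (Finset.mem_univ i))]
  simp

lemma normalForm_fst_zero (c : ZMod k) : normalForm v z (c, 0) = z ^ c.val := by
  simp [normalForm, word]

variable [NeZero k] {C : ι → ι → ZMod k} (hv : ∀ i, v i ^ k = 1) (hz : z ^ k = 1)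
  (hzc : ∀ g, Commute z g) (hC : ∀ i j, v i * v j = v j * v i * z ^ (C i j).val)
include hv hz hzc hC

lemma normalForm_cocycleMul (p q : ZMod k × (ι → ZMod k)) :
    normalForm v z (cocycleMul (cross C) p q) = normalForm v z p * normalForm v z q := by
  simp only [normalForm, cocycleMul, pow_val_add hz]
  conv_rhs => rw [mul_assoc, ← mul_assoc (word v _ _), ← ((hzc _).pow_left _).eq, mul_assoc,
    word_mul_word hv hz hzc hC]
  simp only [mul_assoc]
  rfl

lemma normalForm_surjective [DecidableEq ι] [Finite V]
    (hgen : Subgroup.closure (Set.range v ∪ {z}) = ⊤) :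
    Function.Surjective (normalForm v z : ZMod k × (ι → ZMod k) → V) := by
  let S : Submonoid V :=
    { carrier := Set.range (normalForm v z)
      one_mem' := ⟨(0, 0), by simp [normalForm_fst_zero]⟩
      mul_mem' := by
        rintro _ _ ⟨p, rfl⟩ ⟨q, rfl⟩
        exact ⟨_, normalForm_cocycleMul hv hz hzc hC p q⟩ }
  have hS : Submonoid.closure (Set.range v ∪ {z}) ≤ S := by
    rw [Submonoid.closure_le]
    rintro _ (⟨i, rfl⟩ | rfl)
    · exact ⟨(0, Pi.single i 1), by
        rw [normalForm_zero_single, ← pow_eq_pow_val (hv i) Nat.cast_one, pow_one]⟩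
    · exact ⟨(1, 0), by rw [normalForm_fst_zero, ← pow_eq_pow_val hz Nat.cast_one, pow_one]⟩
  intro g
  have hg : g ∈ (Subgroup.closure (Set.range v ∪ {z})).toSubmonoid := by rw [hgen]; trivial
  rw [Subgroup.closure_toSubmonoid_of_finite] at hg
  exact hS hg

lemma normalForm_bijective [DecidableEq ι] (hgen : Subgroup.closure (Set.range v ∪ {z}) = ⊤)
    (hcard : Nat.card V = k ^ (Fintype.card ι + 1)) :
    Function.Bijective (normalForm v z : ZMod k × (ι → ZMod k) → V) := by
  have : Finite V := Nat.finite_of_card_ne_zero (by rw [hcard]; exact pow_ne_zero _ (NeZero.ne k))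
  refine (normalForm_surjective hv hz hzc hC hgen).bijective_of_nat_card_le ?_
  simp [hcard, Nat.card_eq_fintype_card, ZMod.card, pow_succ, mul_comm]

end NormalForm

section CentralLift
variable {M : Type*} [AddCommGroup M] (ω : M →+ M →+ ZMod 3) (α : M →+ M) (ε : ZMod 3)

-- Since `2 = -1` in `ZMod 3`, the correction `-D e e` is `D e e / 2` for
-- `D e f = ω (α e) (α f) - ε * ω e f`; this makes the map multiplicative when `D` is symmetric.
def centralLift (p : ZMod 3 × M) : ZMod 3 × M :=
  (ε * p.1 - (ω (α p.2) (α p.2) - ε * ω p.2 p.2), α p.2)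

variable {ω α ε}

lemma centralLift_cocycleMul
    (hsymm : ∀ e f, ω (α e) (α f) - ε * ω e f = ω (α f) (α e) - ε * ω f e)
    (p q : ZMod 3 × M) :
    centralLift ω α ε (cocycleMul ω p q) =
      cocycleMul ω (centralLift ω α ε p) (centralLift ω α ε q) := by
  have h3 : (3 : ZMod 3) = 0 := rfl
  refine Prod.ext ?_ (map_add α _ _)
  simp only [centralLift, cocycleMul, map_add, AddMonoidHom.add_apply]
  linear_combination hsymm p.2 q.2 - (ω (α p.2) (α q.2) - ε * ω p.2 q.2) * h3

lemma centralLift_injective (hε : ε * ε = 1) (hα : Function.Injective α) :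
    Function.Injective (centralLift ω α ε) := by
  rintro ⟨c, e⟩ ⟨d, f⟩ h
  obtain ⟨h1, h2⟩ := Prod.ext_iff.mp h
  obtain rfl : e = f := hα h2
  refine Prod.ext ?_ rfl
  have hc : ε * c = ε * d := by simpa [centralLift] using h1
  calc c = ε * ε * c := by rw [hε, one_mul]
    _ = ε * ε * d := by rw [mul_assoc, hc, ← mul_assoc]
    _ = d := by rw [hε, one_mul]

end CentralLift

lemma exists_mulAut_conj {X V : Type*} [Group V] {Φ : X → V} (hΦ : Function.Bijective Φ)
    {F : X → X} (hF : Function.Bijective F) {mul : X → X → X}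
    (hΦmul : ∀ x y, Φ (mul x y) = Φ x * Φ y)
    (hFmul : ∀ x y, F (mul x y) = mul (F x) (F y)) :
    ∃ A : MulAut V, ∀ x, A (Φ x) = Φ (F x) := by
  let eΦ := Equiv.ofBijective Φ hΦ
  let A : V ≃ V := eΦ.symm.trans ((Equiv.ofBijective F hF).trans eΦ)
  have hA : ∀ x, A (Φ x) = Φ (F x) := fun x => by
    simp [A, eΦ, Equiv.ofBijective_symm_apply_apply]
  refine ⟨MulEquiv.mk' A fun g h => ?_, hA⟩
  obtain ⟨x, rfl⟩ := hΦ.surjective g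
  obtain ⟨y, rfl⟩ := hΦ.surjective h
  rw [← hΦmul, hA, hA, hA, hFmul, hΦmul]

section SignedPerm
variable {ι R : Type*} [CommRing R] (π : Equiv.Perm ι) (σ : ι → ℤˣ)

def signedPerm : (ι → R) →+ (ι → R) :=
  AddMonoidHom.mk' (fun e j => ((σ j : ℤ) : R) * e (π.symm j)) fun e f => by
    ext j; simp [mul_add]

variable {π σ}

lemma signedPerm_apply (e : ι → R) (j : ι) :
    signedPerm π σ e j = ((σ j : ℤ) : R) * e (π.symm j) := rfl

lemma signedPerm_injective : Function.Injective (signedPerm π σ : (ι → R) → (ι → R)) := by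
  intro e f h
  ext i
  have hσ : ((σ (π i) : ℤ) : R) * ((σ (π i) : ℤ) : R) = 1 := by
    rw [← Int.cast_mul, ← Units.val_mul, Int.units_mul_self, Units.val_one, Int.cast_one]
  have := congrArg (((σ (π i) : ℤ) : R) * ·) (congrFun h (π i))
  simpa [signedPerm_apply, ← mul_assoc, hσ] using this

lemma signedPerm_single [DecidableEq ι] (i : ι) (t : R) :
    signedPerm π σ (Pi.single i t) = Pi.single (π i) (((σ (π i) : ℤ) : R) * t) := by
  ext j
  rcases eq_or_ne j (π i) with rfl | hj
  · simp [signedPerm_apply]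
  · simp [signedPerm_apply, hj, Equiv.symm_apply_eq]

variable [Fintype ι] {C : ι → ι → R}

lemma sum_sum_signedPerm {ε : R}
    (hinv : ∀ i j, ((σ (π i) : ℤ) : R) * ((σ (π j) : ℤ) : R) * C (π i) (π j) = ε * C i j)
    (e f : ι → R) :
    ∑ a, ∑ b, signedPerm π σ e a * signedPerm π σ f b * C a b =
      ε * ∑ a, ∑ b, e a * f b * C a b := by
  rw [← Equiv.sum_comp π, Finset.mul_sum]
  refine Finset.sum_congr rfl fun a _ => ?_
  rw [← Equiv.sum_comp π, Finset.mul_sum]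
  refine Finset.sum_congr rfl fun b _ => ?_
  simp only [signedPerm_apply, Equiv.symm_apply_apply]
  linear_combination e a * f b * hinv a b

lemma cross_sub_cross_swap (hanti : ∀ i j, C j i = -C i j) (hdiag : ∀ i, C i i = 0)
    (e f : ι → R) : cross C e f - cross C f e = ∑ a, ∑ b, e a * f b * C a b := by
  rw [show cross C e f - cross C f e = _ from crossForm_sub_swap hanti hdiag _ e f,
    Finset.sum_map_toList]
  exact Finset.sum_congr rfl fun a _ => Finset.sum_map_toList _ _

lemma cross_signedPerm_sub_symm {ε : R}
    (hanti : ∀ i j, C j i = -C i j) (hdiag : ∀ i, C i i = 0)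
    (hinv : ∀ i j, ((σ (π i) : ℤ) : R) * ((σ (π j) : ℤ) : R) * C (π i) (π j) = ε * C i j)
    (e f : ι → R) :
    cross C (signedPerm π σ e) (signedPerm π σ f) - ε * cross C e f =
      cross C (signedPerm π σ f) (signedPerm π σ e) - ε * cross C f e := by
  have h1 := cross_sub_cross_swap hanti hdiag (signedPerm π σ e) (signedPerm π σ f)
  have h2 := cross_sub_cross_swap hanti hdiag e f
  linear_combination h1 - ε * h2 + sum_sum_signedPerm hinv e f

end SignedPerm

section ExistsMulAut
variable {V ι : Type*} [Group V] [Fintype ι] {v : ι → V} {z : V}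

lemma ne_inv_of_normalForm_injective [DecidableEq ι] (hv : ∀ i, v i ^ 3 = 1)
    (hinj : Function.Injective (normalForm v z : ZMod 3 × (ι → ZMod 3) → V)) (i : ι) :
    v i ≠ (v i)⁻¹ := by
  intro h
  have hsingle : ((0, Pi.single i 1) : ZMod 3 × (ι → ZMod 3)) =
      (0, Pi.single i ((-1 : ℤ) : ZMod 3)) := hinj <| by
    rw [normalForm_zero_single, normalForm_zero_single, pow_val_intCast (hv i), ZMod.val_one,
      pow_one, zpow_neg_one, ← h]
  have h1 : (1 : ZMod 3) = ((-1 : ℤ) : ZMod 3) := by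
    simpa using congrFun (congrArg Prod.snd hsingle) i
  exact absurd h1 (by decide)

lemma exists_mulAut_of_signedPerm [DecidableEq ι] {J : ι → ι → ℤ} (hv : ∀ i, v i ^ 3 = 1) (hz : z ^ 3 = 1)
    (hzc : ∀ g, Commute z g) (hJ : ∀ i j, v i * v j = v j * v i * z ^ J i j)
    (hanti : ∀ i j, J j i = -J i j) (hdiag : ∀ i, J i i = 0)
    (hbij : Function.Bijective (normalForm v z : ZMod 3 × (ι → ZMod 3) → V))
    (π : Equiv.Perm ι) (σ : ι → ℤˣ) (ε : ℤˣ)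
    (hinv : ∀ i j, (σ (π i) * σ (π j) : ℤ) * J (π i) (π j) = ε * J i j) :
    ∃ A : MulAut V, (∀ i, A (v i) = v (π i) ^ (σ (π i) : ℤ)) ∧ A z = z ^ (ε : ℤ) := by
  set C : ι → ι → ZMod 3 := fun i j => (J i j : ZMod 3)
  have hC : ∀ i j, v i * v j = v j * v i * z ^ (C i j).val := fun i j => by
    rw [hJ, pow_val_intCast hz]
  have hCanti : ∀ i j, C j i = -C i j := fun i j => by simp [C, hanti i j]
  have hCdiag : ∀ i, C i i = 0 := fun i => by simp [C, hdiag i]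
  set ε' : ZMod 3 := ((ε : ℤ) : ZMod 3)
  have hε : ε' * ε' = 1 := by
    rw [← Int.cast_mul, ← Units.val_mul, Int.units_mul_self, Units.val_one, Int.cast_one]
  have hCinv : ∀ i j,
      ((σ (π i) : ℤ) : ZMod 3) * ((σ (π j) : ℤ) : ZMod 3) * C (π i) (π j) = ε' * C i j :=
    fun i j => by simpa [C, ε'] using congrArg (Int.cast : ℤ → ZMod 3) (hinv i j)
  have hF := Finite.injective_iff_bijective.mp
    (centralLift_injective (ω := cross C) hε (signedPerm_injective (π := π) (σ := σ)))
  obtain ⟨A, hA⟩ := exists_mulAut_conj hbij hF (normalForm_cocycleMul hv hz hzc hC)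
    (centralLift_cocycleMul (cross_signedPerm_sub_symm hCanti hCdiag hCinv))
  have hcross_single : ∀ i (s t : ZMod 3), cross C (Pi.single i s) (Pi.single i t) = 0 :=
    fun i s t => crossForm_single_single hCdiag _ i s t
  refine ⟨A, fun i => ?_, ?_⟩
  · have h := hA (0, Pi.single i 1)
    simp only [centralLift, signedPerm_single, hcross_single, mul_zero, sub_zero,
      normalForm_zero_single, mul_one] at h
    rwa [ZMod.val_one, pow_one, pow_val_intCast (hv (π i))] at h
  · have h := hA (1, 0)
    simp only [centralLift, map_zero, mul_zero, sub_zero, mul_one, normalForm_fst_zero] at h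
    rwa [ZMod.val_one, pow_one, pow_val_intCast hz] at h

end ExistsMulAut

section Dihedral
variable {G : Type*} [Group G] {a b : G} {N : ℕ} [NeZero N]

lemma mul_pow_mul_eq_inv (hbab : b * a * b = a⁻¹) (hb : b * b = 1) (k : ℕ) :
    b * a ^ k * b = (a ^ k)⁻¹ := by
  have hs : SemiconjBy b a a⁻¹ := by
    rw [SemiconjBy, ← hbab, mul_assoc _ b, hb, mul_one]
  rw [(hs.pow_right k).eq, inv_pow, mul_assoc, hb, mul_one]

variable (a b) in
def dihedralHom (ha : a ^ N = 1) (hb : b * b = 1) (hbab : b * a * b = a⁻¹) :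
    DihedralGroup N →* G where
  toFun
    | .r t => a ^ t.val
    | .sr t => b * a ^ t.val
  map_one' := show a ^ (0 : ZMod N).val = 1 by rw [ZMod.val_zero, pow_zero]
  map_mul' := by
    have hconj := mul_pow_mul_eq_inv hbab hb
    rintro (s | s) (t | t)
    · simp only [DihedralGroup.r_mul_r, pow_val_add ha]
    · simp only [DihedralGroup.r_mul_sr, sub_eq_neg_add, pow_val_add ha, pow_val_neg ha, ← hconj,
        ← mul_assoc, hb, one_mul]
    · simp only [DihedralGroup.sr_mul_r, pow_val_add ha, mul_assoc]
    · simp only [DihedralGroup.sr_mul_sr, sub_eq_neg_add, pow_val_add ha, pow_val_neg ha,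
        ← hconj, ← mul_assoc]

lemma dihedralHom_injective (ha : a ^ N = 1) (hb : b * b = 1) (hbab : b * a * b = a⁻¹)
    (hord : orderOf a = N) (hN : 2 < N) : Function.Injective (dihedralHom a b ha hb hbab) := by
  rw [injective_iff_map_eq_one]
  rintro (t | t) h
  · have hdvd := orderOf_dvd_of_pow_eq_one (show a ^ t.val = 1 from h)
    rw [hord] at hdvd
    rw [DihedralGroup.one_def, (ZMod.val_eq_zero t).mp
      (Nat.eq_zero_of_dvd_of_lt hdvd (ZMod.val_lt t))]
  · exfalso
    have hc : Commute b a := by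
      rw [eq_inv_of_mul_eq_one_left h]; exact ((Commute.refl a).pow_left _).inv_left
    have hinv : a⁻¹ = a := by rw [← hbab, hc.eq, mul_assoc, hb, mul_one]
    have h2 : orderOf a ∣ 2 := orderOf_dvd_of_pow_eq_one (by
      rw [pow_two]; nth_rewrite 2 [← hinv]; exact mul_inv_cancel a)
    have := Nat.le_of_dvd two_pos (hord ▸ h2)
    omega

lemma range_dihedralHom (ha : a ^ N = 1) (hb : b * b = 1) (hbab : b * a * b = a⁻¹) :
    (dihedralHom a b ha hb hbab).range = Subgroup.closure {a, b} := by
  have haS : a ∈ Subgroup.closure {a, b} := Subgroup.subset_closure (by simp)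
  have hbS : b ∈ Subgroup.closure {a, b} := Subgroup.subset_closure (by simp)
  refine le_antisymm ?_ ((Subgroup.closure_le _).mpr ?_)
  · rintro _ ⟨t | t, rfl⟩
    · exact Subgroup.pow_mem _ haS _
    · exact Subgroup.mul_mem _ hbS (Subgroup.pow_mem _ haS _)
  · rw [Set.insert_subset_iff, Set.singleton_subset_iff]
    exact ⟨⟨.r 1, show a ^ (1 : ZMod N).val = a by
        rw [← pow_eq_pow_val ha Nat.cast_one, pow_one]⟩,
      ⟨.sr 0, show b * a ^ (0 : ZMod N).val = b by rw [ZMod.val_zero, pow_zero, mul_one]⟩⟩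

end Dihedral

lemma nonempty_closure_pair_mulEquiv_dihedralGroup {G : Type*} [Group G] {a b : G} {N : ℕ}
    (hord : orderOf a = N) (hN : 2 < N) (hb : b * b = 1) (hbab : b * a * b = a⁻¹) :
    Nonempty (Subgroup.closure {a, b} ≃* DihedralGroup N) := by
  have : NeZero N := ⟨by omega⟩
  have ha : a ^ N = 1 := hord ▸ pow_orderOf_eq_one a
  exact ⟨(MulEquiv.subgroupCongr (range_dihedralHom ha hb hbab).symm).trans
    (MonoidHom.ofInjective (dihedralHom_injective ha hb hbab hord hN)).symm⟩

def pairingMatrix (n : ℕ) (i j : Fin n) : ℤ :=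
  if (j : ℕ) < i then (-1) ^ ((i : ℕ) - j)
  else if (i : ℕ) < j then -(-1) ^ ((j : ℕ) - i)
  else 0

section Cyclic
variable {n : ℕ}

def orderSign (i j : Fin n) : ℤ := if (j : ℕ) < i then 1 else if (i : ℕ) < j then -1 else 0

lemma neg_one_pow_eq_of_mod_two {a b : ℕ} (h : a % 2 = b % 2) : (-1 : ℤ) ^ a = (-1) ^ b := by
  rw [neg_one_pow_eq_pow_mod_two, h, ← neg_one_pow_eq_pow_mod_two]

lemma pairingMatrix_eq (i j : Fin n) :
    pairingMatrix n i j = (-1) ^ ((i : ℕ) + j) * orderSign i j := by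
  unfold pairingMatrix orderSign
  split_ifs
  · rw [mul_one]; exact neg_one_pow_eq_of_mod_two (by omega)
  · rw [mul_neg_one,
      neg_one_pow_eq_of_mod_two (a := (j : ℕ) - i) (b := (i : ℕ) + j) (by omega)]
  · rw [mul_zero]

lemma pairingMatrix_swap (i j : Fin n) : pairingMatrix n j i = -pairingMatrix n i j := by
  unfold pairingMatrix
  split_ifs <;> omega

lemma pairingMatrix_self (i : Fin n) : pairingMatrix n i i = 0 := by
  simp [pairingMatrix]

variable [NeZero n]

def wrapSign (j : Fin n) : ℤˣ := if j = 0 then -1 else 1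

lemma val_add_one_eq_ite (i : Fin n) :
    ((i + 1 : Fin n) : ℕ) = if (i : ℕ) + 1 < n then (i : ℕ) + 1 else 0 := by
  obtain ⟨N, rfl⟩ := Nat.exists_eq_succ_of_ne_zero (NeZero.ne n)
  rw [Fin.val_add_one]
  simp only [Fin.ext_iff, Fin.val_last]
  split_ifs <;> omega

lemma coe_wrapSign (j : Fin n) : (wrapSign j : ℤ) = if (j : ℕ) = 0 then -1 else 1 := by
  simp only [wrapSign, Fin.ext_iff, Fin.val_zero]
  split_ifs <;> rfl

variable (hn : Even n)
include hn

lemma neg_one_pow_val_add_one (i : Fin n) :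
    (-1 : ℤ) ^ ((i + 1 : Fin n) : ℕ) = -(-1) ^ (i : ℕ) := by
  obtain ⟨r, hr⟩ := hn
  rw [val_add_one_eq_ite]
  split_ifs
  · rw [pow_succ, mul_neg_one]
  · rw [neg_one_pow_eq_of_mod_two (a := i) (b := 1) (by omega)]; norm_num

lemma pairingMatrix_add_one (i j : Fin n) :
    wrapSign (i + 1) * wrapSign (j + 1) * pairingMatrix n (i + 1) (j + 1) =
      pairingMatrix n i j := by
  have hsign : (wrapSign (i + 1) * wrapSign (j + 1) : ℤ) * orderSign (i + 1) (j + 1) =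
      orderSign i j := by
    simp only [coe_wrapSign, orderSign, val_add_one_eq_ite]
    have := i.isLt; have := j.isLt
    split_ifs <;> simp_all <;> omega
  rw [pairingMatrix_eq, pairingMatrix_eq, pow_add, pow_add, neg_one_pow_val_add_one hn,
    neg_one_pow_val_add_one hn, ← hsign]
  ring

lemma neg_one_pow_val_neg (i : Fin n) : (-1 : ℤ) ^ ((-i : Fin n) : ℕ) = (-1) ^ (i : ℕ) := by
  obtain ⟨r, hr⟩ := hn
  rw [Fin.val_neg]
  split_ifs with h
  · simp [h]
  · exact neg_one_pow_eq_of_mod_two (by have := i.isLt; omega)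

lemma pairingMatrix_neg (i j : Fin n) :
    wrapSign (-i) * wrapSign (-j) * pairingMatrix n (-i) (-j) = -pairingMatrix n i j := by
  have hsign : (wrapSign (-i) * wrapSign (-j) : ℤ) * orderSign (-i) (-j) = -orderSign i j := by
    simp only [coe_wrapSign, orderSign, Fin.val_neg, Fin.ext_iff, Fin.val_zero]
    have := i.isLt; have := j.isLt
    split_ifs <;> simp_all <;> omega
  rw [pairingMatrix_eq, pairingMatrix_eq, pow_add, pow_add, neg_one_pow_val_neg hn,
    neg_one_pow_val_neg hn, ← mul_neg, ← hsign]
  ring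

end Cyclic

section Orbit
open Fin.NatCast
variable {V : Type*} [Group V] {n : ℕ} [NeZero n] (v : Fin n → V)

def signedOrbit (k : ℕ) : V := v k ^ ((-1 : ℤ) ^ (k / n))

variable {v} {f : MulAut V} (hf : ∀ i, f (v i) = v (i + 1) ^ (wrapSign (i + 1) : ℤ))
include hf

lemma apply_signedOrbit (k : ℕ) : f (signedOrbit v k) = signedOrbit v (k + 1) := by
  have hsign :
      (wrapSign ((k + 1 : ℕ) : Fin n) : ℤ) * (-1) ^ (k / n) = (-1) ^ ((k + 1) / n) := by
    simp only [wrapSign, Fin.natCast_eq_zero, Nat.succ_div]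
    split_ifs <;> simp [pow_succ]
  rw [signedOrbit, map_zpow, hf, ← zpow_mul, ← Nat.cast_succ, hsign, signedOrbit]

lemma pow_apply_signedOrbit (j k : ℕ) : (f ^ j) (signedOrbit v k) = signedOrbit v (k + j) := by
  induction j with
  | zero => simp
  | succ j ih => rw [pow_succ', MulAut.mul_apply, ih, apply_signedOrbit hf, add_assoc]

lemma pow_card_apply_eq_inv (i : Fin n) : (f ^ n) (v i) = (v i)⁻¹ := by
  have hi : signedOrbit v i = v i := by simp [signedOrbit, Nat.div_eq_of_lt i.isLt]
  have hin : signedOrbit v (i + n) = (v i)⁻¹ := by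
    simp [signedOrbit, Nat.add_div_right _ (NeZero.pos n), Nat.div_eq_of_lt i.isLt]
  rw [← hin, ← pow_apply_signedOrbit hf, hi]

end Orbit

section Generators
variable {V : Type*} [Group V] {n : ℕ} [NeZero n] {v : Fin n → V} {z : V}

lemma wrapSign_neg (i : Fin n) : wrapSign (-i) = wrapSign i := by
  simp [wrapSign]

lemma coe_wrapSign_mul_self (i : Fin n) : (wrapSign i : ℤ) * wrapSign i = 1 := by
  rw [← Units.val_mul, Int.units_mul_self, Units.val_one]

lemma zpow_wrapSign_add_one (i : Fin n) :
    v (i + 1) ^ (wrapSign (i + 1) : ℤ) =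
      if h : (i : ℕ) + 1 < n then v ⟨i + 1, h⟩ else (v ⟨0, NeZero.pos n⟩)⁻¹ := by
  by_cases h : (i : ℕ) + 1 < n
  · rw [dif_pos h, show i + 1 = ⟨i + 1, h⟩ from Fin.ext (by rw [val_add_one_eq_ite, if_pos h]),
      coe_wrapSign]
    simp
  · rw [dif_neg h, show i + 1 = ⟨0, NeZero.pos n⟩ from
      Fin.ext (by rw [val_add_one_eq_ite, if_neg h]), coe_wrapSign]
    simp

lemma zpow_wrapSign_neg (i : Fin n) :
    v (-i) ^ (wrapSign (-i) : ℤ) =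
      if h : (i : ℕ) = 0 then (v ⟨0, NeZero.pos n⟩)⁻¹ else v ⟨n - i, by omega⟩ := by
  rw [wrapSign_neg, coe_wrapSign]
  split_ifs with h
  · rw [zpow_neg_one, show -i = ⟨0, NeZero.pos n⟩ by ext; simp [Fin.val_neg, Fin.ext_iff, h]]
  · rw [zpow_one, show -i = ⟨n - i, by omega⟩ by ext; simp [Fin.val_neg, Fin.ext_iff, h]]

variable (hgen : Subgroup.closure (Set.range v ∪ {z}) = ⊤)
include hgen

variable {a b : MulAut V} (ha : ∀ i, a (v i) = v (i + 1) ^ (wrapSign (i + 1) : ℤ))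
  (haz : a z = z) (hb : ∀ i, b (v i) = v (-i) ^ (wrapSign (-i) : ℤ)) (hbz : b z = z⁻¹)

include hb hbz in
lemma mul_self_eq_one_of_neg : b * b = 1 := by
  refine mulAut_ext_of_closure hgen (fun i => ?_) (by simp [hbz])
  rw [MulAut.mul_apply, hb, map_zpow, hb, neg_neg, wrapSign_neg, ← zpow_mul,
    coe_wrapSign_mul_self, zpow_one, MulAut.one_apply]

include ha haz hb hbz in
lemma mul_mul_eq_inv_of_add_one_of_neg : b * a * b = a⁻¹ := by
  have hba : ∀ j, (b * a) (v j) = v (-(j + 1)) := fun j => by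
    rw [MulAut.mul_apply, ha, map_zpow, hb, wrapSign_neg, ← zpow_mul, coe_wrapSign_mul_self,
      zpow_one]
  have hsq : (b * a) * (b * a) = 1 := by
    refine mulAut_ext_of_closure hgen (fun i => ?_) (by simp [haz, hbz])
    rw [MulAut.mul_apply, hba, hba, MulAut.one_apply]
    congr 1
    abel
  exact eq_inv_of_mul_eq_one_left (by rw [← hsq]; group)

end Generators

lemma exists_shift_and_reversal {V : Type*} [Group V] {n : ℕ} [NeZero n] (hn : Even n)
    {v : Fin n → V} {z : V} (hv : ∀ i, v i ^ 3 = 1) (hz : z ^ 3 = 1) (hzc : ∀ g, Commute z g)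
    (hrel : ∀ i j, v i * v j = v j * v i * z ^ pairingMatrix n i j)
    (hbij : Function.Bijective (normalForm v z : ZMod 3 × (Fin n → ZMod 3) → V)) :
    (∃ a : MulAut V, (∀ i, a (v i) = v (i + 1) ^ (wrapSign (i + 1) : ℤ)) ∧ a z = z) ∧
      ∃ b : MulAut V, (∀ i, b (v i) = v (-i) ^ (wrapSign (-i) : ℤ)) ∧ b z = z⁻¹ := by
  obtain ⟨a, ha, haz⟩ := exists_mulAut_of_signedPerm hv hz hzc hrel pairingMatrix_swap
    pairingMatrix_self hbij (Equiv.addRight 1) wrapSign 1 (by simpa using pairingMatrix_add_one hn)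
  obtain ⟨b, hb, hbz⟩ := exists_mulAut_of_signedPerm hv hz hzc hrel pairingMatrix_swap
    pairingMatrix_self hbij (Equiv.neg _) wrapSign (-1) (by simpa using pairingMatrix_neg hn)
  exact ⟨⟨a, by simpa using ha, by simpa using haz⟩, ⟨b, by simpa using hb, by simpa using hbz⟩⟩

lemma orderOf_eq_two_pow_of_add_one {V : Type*} [Group V] {m : ℕ} {v : Fin (2 ^ m) → V} {z : V}
    (hgen : Subgroup.closure (Set.range v ∪ {z}) = ⊤) {a : MulAut V}
    (ha : ∀ i, a (v i) = v (i + 1) ^ (wrapSign (i + 1) : ℤ)) (haz : a z = z)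
    (hv0 : v 0 ≠ (v 0)⁻¹) : orderOf a = 2 ^ (m + 1) := by
  have hz : ∀ k : ℕ, (a ^ k) z = z := fun k =>
    (MulAction.stabilizer (MulAut V) z).pow_mem (MulAction.mem_stabilizer_iff.mpr haz) k
  refine orderOf_eq_prime_pow (fun h => hv0 ?_) (mulAut_ext_of_closure hgen (fun i => ?_) ?_)
  · rw [← pow_card_apply_eq_inv ha, h, MulAut.one_apply]
  · rw [pow_succ, pow_mul, pow_two, MulAut.mul_apply, pow_card_apply_eq_inv ha, map_inv,
      pow_card_apply_eq_inv ha, inv_inv, MulAut.one_apply]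
  · rw [hz, MulAut.one_apply]

end ExtraspecialAut

open ExtraspecialAut in
/-- The maps `a` and `b` on the generators of the extraspecial group `V` of exponent 3
and order `3^(2^m + 1)` extend to automorphisms, with `a` of order `2^(m+1)`, `b` of
order 2, `bab = a⁻¹`, so that `⟨a,b⟩` is dihedral of order `2^(m+2)`.
(Generators are indexed by `Fin (2^m)`, i.e. `v i` corresponds to `v_{i+1}` of the paper.) -/
theorem stmt16 (m : ℕ) (hm : 1 ≤ m) (V : Type*) [Group V]
    (v : Fin (2 ^ m) → V) (z : V)
    (J : Fin (2 ^ m) → Fin (2 ^ m) → ℤ)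
    (hJ : ∀ i j : Fin (2 ^ m), J i j =
      if (j : ℕ) < (i : ℕ) then (-1 : ℤ) ^ ((i : ℕ) - (j : ℕ))
      else if (i : ℕ) < (j : ℕ) then -(-1 : ℤ) ^ ((j : ℕ) - (i : ℕ))
      else 0)
    (hv3 : ∀ i, (v i) ^ 3 = 1) (hz3 : z ^ 3 = 1)
    (hvz : ∀ i, v i * z = z * v i)
    (hcomm : ∀ i j, (v i)⁻¹ * (v j)⁻¹ * v i * v j = z ^ (J i j))
    (hgen : Subgroup.closure (Set.range v ∪ {z}) = ⊤)
    (hcard : Nat.card V = 3 ^ (2 ^ m + 1)) :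
    ∃ a b : MulAut V,
      (∀ i : Fin (2 ^ m), a (v i) =
        if h : (i : ℕ) + 1 < 2 ^ m then v ⟨(i : ℕ) + 1, h⟩
        else (v ⟨0, Nat.two_pow_pos m⟩)⁻¹) ∧
      a z = z ∧ orderOf a = 2 ^ (m + 1) ∧
      (∀ i : Fin (2 ^ m), b (v i) =
        if h : (i : ℕ) = 0 then (v ⟨0, Nat.two_pow_pos m⟩)⁻¹
        else v ⟨2 ^ m - (i : ℕ), by have := i.isLt; omega⟩) ∧
      b z = z⁻¹ ∧ orderOf b = 2 ∧ b * a * b = a⁻¹ ∧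
      Nat.card ↥(Subgroup.closure ({a, b} : Set (MulAut V))) = 2 ^ (m + 2) ∧
      Nonempty (↥(Subgroup.closure ({a, b} : Set (MulAut V))) ≃*
        DihedralGroup (2 ^ (m + 1))) := by
  obtain rfl : J = pairingMatrix (2 ^ m) := funext fun i => funext (hJ i)
  have hn : Even (2 ^ m) := (Nat.even_pow' (by omega)).mpr even_two
  have hcenter : z ∈ Subgroup.center V :=
    mem_center_of_closure_eq_top hgen (by rintro _ (⟨i, rfl⟩ | rfl); exacts [hvz i, rfl])
  have hzc : ∀ g, Commute z g := fun g => (Subgroup.mem_center_iff.mp hcenter g).symm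
  have hrel : ∀ i j, v i * v j = v j * v i * z ^ pairingMatrix (2 ^ m) i j := fun i j => by
    rw [← hcomm]; group
  have hbij : Function.Bijective (normalForm v z : ZMod 3 × (Fin (2 ^ m) → ZMod 3) → V) :=
    normalForm_bijective hv3 hz3 hzc (fun i j => by rw [pow_val_intCast hz3]; exact hrel i j) hgen
      (by rw [Fintype.card_fin, hcard])
  have hv0 := ne_inv_of_normalForm_injective hv3 hbij.injective 0
  obtain ⟨⟨a, ha, haz⟩, b, hb, hbz⟩ := exists_shift_and_reversal hn hv3 hz3 hzc hrel hbij
  have hbb := mul_self_eq_one_of_neg hgen hb hbz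
  have hbab := mul_mul_eq_inv_of_add_one_of_neg hgen ha haz hb hbz
  have horder := orderOf_eq_two_pow_of_add_one hgen ha haz hv0
  obtain ⟨e⟩ := nonempty_closure_pair_mulEquiv_dihedralGroup horder
    (by rw [pow_succ]; have := Nat.one_lt_two_pow (by omega : m ≠ 0); omega) hbb hbab
  refine ⟨a, b, fun i => (ha i).trans (zpow_wrapSign_add_one i), haz, horder,
    fun i => (hb i).trans (zpow_wrapSign_neg i), hbz,
    orderOf_eq_prime (by rw [sq, hbb]) fun h => hv0 ?_, hbab, ?_, ⟨e⟩⟩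
  · simpa [h, wrapSign] using hb 0
  · rw [Nat.card_congr e.toEquiv, DihedralGroup.nat_card, pow_succ' 2 (m + 1)]
end
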